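/- arXiv:2112.13272 — 3 statements merged into one kernel-verified Lean document; each statement's English description precedes it below -/
import Mathlib

section
/- Let X be a smooth simplicial set. Define the simplicial set X_• by letting X_•(n) be the set of smooth maps Δ^n_• → X (with Δ^n_• carrying the tautological smooth structure), and for a morphism i : [m] → [n] of the simplex category letting X_•(i)(Σ) = Σ ∘ i_•, where i_• : Δ^m_• → Δ^n_• is the map induced by the affine simplicial map i : Δ^m → Δ^n. Then the maps Σ ↦ Σ_* assemble into an isomorphism of simplicial sets X ≅ X_•. -/
noncomputable section

open scoped BigOperators

/-- The topological `d`-simplex `Δ^d = {x ∈ ℝ^d | ∀ i, 0 ≤ xᵢ and ∑ xᵢ ≤ 1}`. -/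
def TSimplex (d : ℕ) : Set (Fin d → ℝ) :=
  {x | (∀ i, 0 ≤ x i) ∧ ∑ i, x i ≤ 1}

/-- A map `σ : Δ^n → Δ^d` is smooth if it extends to a `C^∞` map from an open
neighborhood of `Δ^n` in `ℝ^n` into `ℝ^d`. -/
def IsSmoothSimplexMap {n d : ℕ} (σ : TSimplex n → TSimplex d) : Prop :=
  ∃ (U : Set (Fin n → ℝ)) (gext : (Fin n → ℝ) → (Fin d → ℝ)),
    IsOpen U ∧ TSimplex n ⊆ U ∧ ContDiffOn ℝ (⊤ : ℕ∞) gext U ∧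
      ∀ x : TSimplex n, gext x.1 = (σ x).1

/-- Barycentric coordinates of a point of `ℝ^m` (with respect to the standard simplex). -/
def bary {m : ℕ} (x : Fin m → ℝ) : Fin (m + 1) → ℝ :=
  Fin.cons (1 - ∑ i, x i) x

theorem bary_nonneg {m : ℕ} {x : Fin m → ℝ} (hx : x ∈ TSimplex m) (i : Fin (m + 1)) :
    0 ≤ bary x i := by
  induction i using Fin.cases with
  | zero => simpa [bary] using sub_nonneg.mpr hx.2
  | succ j => simpa [bary] using hx.1 j

theorem sum_bary {m : ℕ} (x : Fin m → ℝ) : ∑ i, bary x i = 1 := by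
  simp [bary, Fin.sum_cons]

/-- The ambient affine map `ℝ^m → ℝ^n` induced by a monotone map of vertex sets
`φ : [m] → [n]`; it sends the `i`-th vertex of `Δ^m` to the `φ i`-th vertex of `Δ^n`. -/
def affineAux {m n : ℕ} (φ : Fin (m + 1) →o Fin (n + 1)) (x : Fin m → ℝ) : Fin n → ℝ :=
  fun j => ∑ i ∈ Finset.univ.filter (fun i => φ i = j.succ), bary x i

theorem affineAux_mem {m n : ℕ} (φ : Fin (m + 1) →o Fin (n + 1)) (x : TSimplex m) :
    affineAux φ x.1 ∈ TSimplex n := by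
  obtain ⟨x, hx⟩ := x
  have h1 : ∑ i' : Fin (n + 1), ∑ i ∈ Finset.univ.filter (fun i => φ i = i'), bary x i = 1 := by
    rw [Finset.sum_fiberwise]; exact sum_bary x
  have h2 := Fin.sum_univ_succ
    (fun i' : Fin (n + 1) => ∑ i ∈ Finset.univ.filter (fun i => φ i = i'), bary x i)
  have h0 : 0 ≤ ∑ i ∈ Finset.univ.filter (fun i => φ i = (0 : Fin (n + 1))), bary x i :=
    Finset.sum_nonneg fun i _ => bary_nonneg hx i
  constructor
  · intro j
    exact Finset.sum_nonneg fun i _ => bary_nonneg hx i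
  · show ∑ j : Fin n, affineAux φ x j ≤ 1
    have : ∑ j : Fin n, affineAux φ x j
        = ∑ j : Fin n, ∑ i ∈ Finset.univ.filter (fun i => φ i = j.succ), bary x i := rfl
    rw [this]
    rw [h2] at h1
    linarith

/-- The affine simplicial map `Δ^m → Δ^n` induced by a monotone map of vertices. -/
def affineMap {m n : ℕ} (φ : Fin (m + 1) →o Fin (n + 1)) (x : TSimplex m) : TSimplex n :=
  ⟨affineAux φ x.1, affineAux_mem φ x⟩

theorem contDiff_bary {m : ℕ} (i : Fin (m + 1)) :
    ContDiff ℝ (⊤ : ℕ∞) fun x : Fin m → ℝ => bary x i := by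
  induction i using Fin.cases with
  | zero =>
      simp only [bary, Fin.cons_zero]
      exact contDiff_const.sub (ContDiff.sum fun j _ =>
        (ContinuousLinearMap.proj j : (Fin m → ℝ) →L[ℝ] ℝ).contDiff)
  | succ j =>
      simp only [bary, Fin.cons_succ]
      exact (ContinuousLinearMap.proj j : (Fin m → ℝ) →L[ℝ] ℝ).contDiff

theorem contDiff_affineAux {m n : ℕ} (φ : Fin (m + 1) →o Fin (n + 1)) :
    ContDiff ℝ (⊤ : ℕ∞) (affineAux φ) := by
  rw [contDiff_pi]
  intro j
  exact ContDiff.sum fun i _ => contDiff_bary i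

/-- Affine simplicial maps are smooth maps of simplices. -/
theorem isSmooth_affineMap {m n : ℕ} (φ : Fin (m + 1) →o Fin (n + 1)) :
    IsSmoothSimplexMap (affineMap φ) :=
  ⟨Set.univ, affineAux φ, isOpen_univ, Set.subset_univ _,
    (contDiff_affineAux φ).contDiffOn, fun _ => rfl⟩

/-- The identity is a smooth map of simplices. -/
theorem isSmooth_id {n : ℕ} : IsSmoothSimplexMap (id : TSimplex n → TSimplex n) :=
  ⟨Set.univ, id, isOpen_univ, Set.subset_univ _, contDiffOn_id, fun _ => rfl⟩

/-- Constant maps of simplices are smooth. -/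
theorem isSmooth_const {k d : ℕ} (y : TSimplex d) :
    IsSmoothSimplexMap (fun _ : TSimplex k => y) :=
  ⟨Set.univ, fun _ => y.1, isOpen_univ, Set.subset_univ _, contDiffOn_const, fun _ => rfl⟩

/-- Composition of smooth maps of simplices is smooth. -/
theorem IsSmoothSimplexMap.comp {j k n : ℕ} {σ : TSimplex k → TSimplex n}
    {ρ : TSimplex j → TSimplex k} (hσ : IsSmoothSimplexMap σ) (hρ : IsSmoothSimplexMap ρ) :
    IsSmoothSimplexMap (σ ∘ ρ) := by
  obtain ⟨U, g, hUo, hUs, hg, hgval⟩ := hσ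
  obtain ⟨V, h, hVo, hVs, hh, hhval⟩ := hρ
  refine ⟨V ∩ h ⁻¹' U, g ∘ h, ?_, ?_, ?_, ?_⟩
  · exact hh.continuousOn.isOpen_inter_preimage hVo hUo
  · intro x hx
    refine ⟨hVs hx, ?_⟩
    show h x ∈ U
    have hx' : h x = (ρ ⟨x, hx⟩).1 := hhval ⟨x, hx⟩
    rw [hx']
    exact hUs (ρ ⟨x, hx⟩).2
  · exact hg.comp (hh.mono Set.inter_subset_left) fun x hx => hx.2
  · intro x
    show g (h x.1) = (σ (ρ x)).1
    rw [hhval x]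
    exact hgval (ρ x)

theorem affineAux_id {n : ℕ} (x : Fin n → ℝ) :
    affineAux (OrderHom.id : Fin (n + 1) →o Fin (n + 1)) x = x := by
  funext j
  show ∑ i ∈ Finset.univ.filter (fun i : Fin (n + 1) => i = j.succ), bary x i = x j
  rw [Finset.filter_eq']
  simp [bary]

theorem affineMap_id {n : ℕ} :
    affineMap (OrderHom.id : Fin (n + 1) →o Fin (n + 1)) = id := by
  funext x
  exact Subtype.ext (affineAux_id x.1)

theorem bary_affineAux {m n : ℕ} (φ : Fin (m + 1) →o Fin (n + 1)) (x : Fin m → ℝ)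
    (i' : Fin (n + 1)) :
    bary (affineAux φ x) i' = ∑ i ∈ Finset.univ.filter (fun i => φ i = i'), bary x i := by
  induction i' using Fin.cases with
  | zero =>
      have h1 : ∑ i'' : Fin (n + 1), ∑ i ∈ Finset.univ.filter (fun i => φ i = i''), bary x i
          = 1 := by rw [Finset.sum_fiberwise]; exact sum_bary x
      rw [Fin.sum_univ_succ] at h1
      have hz : bary (affineAux φ x) 0 = 1 - ∑ i, affineAux φ x i := rfl
      have hs : ∑ j : Fin n, affineAux φ x j
          = ∑ j : Fin n, ∑ i ∈ Finset.univ.filter (fun i => φ i = j.succ), bary x i := rfl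
      rw [hz, hs]
      linarith
  | succ j =>
      simp [bary, affineAux]

theorem affineAux_comp {j k n : ℕ} (φ : Fin (j + 1) →o Fin (k + 1))
    (ψ : Fin (k + 1) →o Fin (n + 1)) (x : Fin j → ℝ) :
    affineAux (ψ.comp φ) x = affineAux ψ (affineAux φ x) := by
  funext l
  have step1 : affineAux ψ (affineAux φ x) l
      = ∑ i' ∈ Finset.univ.filter (fun i' => ψ i' = l.succ),
          ∑ i ∈ Finset.univ.filter (fun i => φ i = i'), bary x i := by
    unfold affineAux
    exact Finset.sum_congr rfl fun i' _ => bary_affineAux φ x i'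
  rw [step1]
  have step2 : ∑ i' ∈ Finset.univ.filter (fun i' => ψ i' = l.succ),
      ∑ i ∈ Finset.univ.filter (fun i => φ i = i'), bary x i
      = ∑ i' ∈ Finset.univ.filter (fun i' => ψ i' = l.succ),
          ∑ i : Fin (j + 1), if φ i = i' then bary x i else 0 := by
    refine Finset.sum_congr rfl fun i' _ => ?_
    rw [Finset.sum_filter]
  rw [step2, Finset.sum_comm]
  have step3 : ∀ i : Fin (j + 1),
      (∑ i' ∈ Finset.univ.filter (fun i' => ψ i' = l.succ), if φ i = i' then bary x i else 0)
      = if ψ (φ i) = l.succ then bary x i else 0 := by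
    intro i
    rw [Finset.sum_ite_eq]
    simp
  rw [Finset.sum_congr rfl fun i _ => step3 i]
  rw [← Finset.sum_filter]
  rfl

theorem affineMap_comp {j k n : ℕ} (φ : Fin (j + 1) →o Fin (k + 1))
    (ψ : Fin (k + 1) →o Fin (n + 1)) :
    affineMap (ψ.comp φ) = affineMap ψ ∘ affineMap φ := by
  funext x
  exact Subtype.ext (affineAux_comp φ ψ x.1)

/-- A simplicial set: a contravariant functor from the simplex category (encoded via
monotone maps of the vertex sets `[n] = Fin (n+1)`) to sets. -/
structure SSetD where
  obj : ℕ → Type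
  map : ∀ (m n : ℕ), (Fin (m + 1) →o Fin (n + 1)) → obj n → obj m
  map_id : ∀ (n : ℕ) (x : obj n), map n n OrderHom.id x = x
  map_comp : ∀ (j k n : ℕ) (φ : Fin (j + 1) →o Fin (k + 1)) (ψ : Fin (k + 1) →o Fin (n + 1))
      (x : obj n), map j n (ψ.comp φ) x = map j k φ (map k n ψ x)

/-- A smooth simplicial set: a simplicial set `X` together with, for each `n`-simplex
`Σ ∈ X(n)`, a simplicial map `Σ_* = g(Σ) : Δ^n_• → X` (encoded by its values
`g n k Σ σ hσ ∈ X(k)` on the smooth `k`-simplices `σ` of `Δ^n_•`) such that `Σ_*`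
restricts to `Σ` on `Δ^n_simp` (`g_restrict`), is simplicial (`g_simplicial`), and
satisfies push-forward functoriality `(Σ_*(σ))_* = Σ_* ∘ σ_•` (`g_push`). -/
structure SmoothSSet extends SSetD where
  g : ∀ (n k : ℕ), obj n → ∀ σ : TSimplex k → TSimplex n, IsSmoothSimplexMap σ → obj k
  g_simplicial : ∀ (n k m : ℕ) (S : obj n) (σ : TSimplex k → TSimplex n)
      (hσ : IsSmoothSimplexMap σ) (φ : Fin (m + 1) →o Fin (k + 1)),
      g n m S (σ ∘ affineMap φ) (hσ.comp (isSmooth_affineMap φ)) = map m k φ (g n k S σ hσ)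
  g_restrict : ∀ (n k : ℕ) (S : obj n) (φ : Fin (k + 1) →o Fin (n + 1)),
      g n k S (affineMap φ) (isSmooth_affineMap φ) = map k n φ S
  g_push : ∀ (n k m : ℕ) (S : obj n) (σ : TSimplex k → TSimplex n) (hσ : IsSmoothSimplexMap σ)
      (ρ : TSimplex m → TSimplex k) (hρ : IsSmoothSimplexMap ρ),
      g k m (g n k S σ hσ) ρ hρ = g n m S (σ ∘ ρ) (hσ.comp hρ)

/-- A smooth map of smooth simplicial sets: a simplicial map `f` such that
`(f(Σ))_* = f ∘ Σ_*` for every simplex `Σ`. -/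
structure SmoothHom (X Y : SmoothSSet) where
  toFun : ∀ (n : ℕ), X.obj n → Y.obj n
  map_simplicial : ∀ (m n : ℕ) (φ : Fin (m + 1) →o Fin (n + 1)) (x : X.obj n),
      toFun m (X.map m n φ x) = Y.map m n φ (toFun n x)
  map_smooth : ∀ (n k : ℕ) (S : X.obj n) (σ : TSimplex k → TSimplex n)
      (hσ : IsSmoothSimplexMap σ),
      toFun k (X.g n k S σ hσ) = Y.g n k (toFun n S) σ hσ

theorem SmoothHom.ext' {X Y : SmoothSSet} {f g : SmoothHom X Y} (h : f.toFun = g.toFun) :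
    f = g := by
  cases f; cases g; cases h; rfl

/-- The set of smooth `k`-simplices of `Δ^d_•`, i.e. smooth maps `Δ^k → Δ^d`. -/
def SmoothSimplexMapT (k d : ℕ) : Type :=
  {σ : TSimplex k → TSimplex d // IsSmoothSimplexMap σ}

/-- The tautological smooth simplicial set `Δ^d_•`: its `k`-simplices are the smooth maps
`Δ^k → Δ^d`, the simplicial structure maps are given by precomposition with affine
simplicial maps, and the smooth structure is `g(Σ)(σ) = Σ ∘ σ`. -/
def DeltaBullet (d : ℕ) : SmoothSSet where
  obj k := SmoothSimplexMapT k d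
  map m n φ σ := ⟨σ.1 ∘ affineMap φ, σ.2.comp (isSmooth_affineMap φ)⟩
  map_id n σ := Subtype.ext (by show σ.1 ∘ affineMap OrderHom.id = σ.1; rw [affineMap_id]; rfl)
  map_comp j k n φ ψ σ := Subtype.ext
    (by show σ.1 ∘ affineMap (ψ.comp φ) = (σ.1 ∘ affineMap ψ) ∘ affineMap φ
        rw [affineMap_comp, Function.comp_assoc])
  g n k S σ hσ := ⟨S.1 ∘ σ, S.2.comp hσ⟩
  g_simplicial n k m S σ hσ φ := Subtype.ext (Function.comp_assoc S.1 σ (affineMap φ)).symm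
  g_restrict n k S φ := rfl
  g_push n k m S σ hσ ρ hρ := Subtype.ext (Function.comp_assoc S.1 σ ρ)

/-- Composition of smooth maps of smooth simplicial sets (diagrammatic order). -/
def SmoothHom.comp {X Y Z : SmoothSSet} (f : SmoothHom X Y) (g : SmoothHom Y Z) :
    SmoothHom X Z where
  toFun n x := g.toFun n (f.toFun n x)
  map_simplicial m n φ x := by
    show g.toFun m (f.toFun m (X.map m n φ x)) = Z.map m n φ (g.toFun n (f.toFun n x))
    rw [f.map_simplicial, g.map_simplicial]
  map_smooth n k S σ hσ := by
    show g.toFun k (f.toFun k (X.g n k S σ hσ)) = Z.g n k (g.toFun n (f.toFun n S)) σ hσ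
    rw [f.map_smooth, g.map_smooth]

/-- The smooth map `i_• : Δ^m_• → Δ^n_•` induced by the affine simplicial map
`i : Δ^m → Δ^n` of a morphism `i : [m] → [n]` of the simplex category. -/
def iBullet {m n : ℕ} (i : Fin (m + 1) →o Fin (n + 1)) :
    SmoothHom (DeltaBullet m) (DeltaBullet n) where
  toFun k ρ := ⟨affineMap i ∘ ρ.1, (isSmooth_affineMap i).comp ρ.2⟩
  map_simplicial k l φ ρ := Subtype.ext (Function.comp_assoc (affineMap i) ρ.1 (affineMap φ))
  map_smooth k l S σ hσ := Subtype.ext (Function.comp_assoc (affineMap i) S.1 σ)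

/-- The simplicial set `X_•` whose `n`-simplices are the smooth maps `Δ^n_• → X`, with
structure maps given by precomposition `X_•(i)(Σ) = Σ ∘ i_•`. -/
def XBullet (X : SmoothSSet) : SSetD where
  obj n := SmoothHom (DeltaBullet n) X
  map m n i F := (iBullet i).comp F
  map_id n F := SmoothHom.ext' (by
    funext k ρ
    show F.toFun k ((iBullet OrderHom.id).toFun k ρ) = F.toFun k ρ
    congr 1
    exact Subtype.ext (by show affineMap OrderHom.id ∘ ρ.1 = ρ.1; rw [affineMap_id]; rfl))
  map_comp j k n φ ψ F := SmoothHom.ext' (by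
    funext l ρ
    show F.toFun l ((iBullet (ψ.comp φ)).toFun l ρ)
        = F.toFun l ((iBullet ψ).toFun l ((iBullet φ).toFun l ρ))
    congr 1
    exact Subtype.ext (by
      show affineMap (ψ.comp φ) ∘ ρ.1 = affineMap ψ ∘ (affineMap φ ∘ ρ.1)
      rw [affineMap_comp, Function.comp_assoc]))

/-!
This is the Yoneda lemma for smooth simplicial sets. By push-forward functoriality, a smooth map
`F : Δ^n_• → X` is determined by `F(id)`, the image of the identity simplex of `Δ^n_•`:
`F(σ) = F(id_*(σ)) = F(id)_*(σ)`. Conversely `Σ_*(id) = Σ`, since the identity is the affine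
simplex of the identity of `[n]`. So `Σ ↦ Σ_*` and `F ↦ F(id)` are mutually inverse, and
naturality in `[n]` is `(i^*Σ)_* = (Σ_*(i))_* = Σ_* ∘ i_•`.
-/

def DeltaBullet.idSimplex (n : ℕ) : SmoothSimplexMapT n n :=
  ⟨id, isSmooth_id⟩

namespace SmoothSSet

variable (X : SmoothSSet)

def pushforward {n : ℕ} (S : X.obj n) : SmoothHom (DeltaBullet n) X where
  toFun k σ := X.g n k S σ.1 σ.2
  map_simplicial m k φ σ := X.g_simplicial n k m S σ.1 σ.2 φ
  map_smooth k m τ σ hσ := (X.g_push n k m S τ.1 τ.2 σ hσ).symm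

theorem g_id {n : ℕ} (S : X.obj n) : X.g n n S id isSmooth_id = S := by
  have h := X.g_restrict n n S OrderHom.id
  rw [X.map_id] at h
  convert h using 2
  exact affineMap_id.symm

theorem pushforward_toFun_idSimplex {n : ℕ} (S : X.obj n) :
    (X.pushforward S).toFun n (DeltaBullet.idSimplex n) = S :=
  X.g_id S

theorem pushforward_map {m n : ℕ} (i : Fin (m + 1) →o Fin (n + 1)) (S : X.obj n) :
    X.pushforward (X.map m n i S) = (iBullet i).comp (X.pushforward S) := by
  refine SmoothHom.ext' (funext₂ fun k ρ => ?_)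
  change X.g m k (X.map m n i S) ρ.1 ρ.2 = X.g n k S (affineMap i ∘ ρ.1) _
  rw [← X.g_restrict n m S i]
  exact X.g_push n m k S (affineMap i) (isSmooth_affineMap i) ρ.1 ρ.2

theorem pushforward_of_toFun_idSimplex {n : ℕ} (F : SmoothHom (DeltaBullet n) X) :
    X.pushforward (F.toFun n (DeltaBullet.idSimplex n)) = F :=
  SmoothHom.ext' (funext₂ fun k σ => (F.map_smooth n k (DeltaBullet.idSimplex n) σ.1 σ.2).symm)

theorem bijective_pushforward (n : ℕ) : Function.Bijective (X.pushforward (n := n)) :=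
  Function.bijective_iff_has_inverse.mpr
    ⟨fun F => F.toFun n (DeltaBullet.idSimplex n), X.pushforward_toFun_idSimplex,
      X.pushforward_of_toFun_idSimplex⟩

end SmoothSSet

/-- Let `X` be a smooth simplicial set and let `X_•` be the simplicial
set whose `n`-simplices are the smooth maps `Δ^n_• → X`, with structure maps
`X_•(i)(Σ) = Σ ∘ i_•`.  Then the maps `Σ ↦ Σ_*` assemble into an isomorphism of
simplicial sets `X ≅ X_•`. -/
theorem X_isomorphic_to_XBullet (X : SmoothSSet) :
    ∃ F : ∀ n : ℕ, X.obj n → SmoothHom (DeltaBullet n) X,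
      (∀ (n k : ℕ) (S : X.obj n) (σ : SmoothSimplexMapT k n),
          (F n S).toFun k σ = X.g n k S σ.1 σ.2) ∧
      (∀ (m n : ℕ) (i : Fin (m + 1) →o Fin (n + 1)) (S : X.obj n),
          F m (X.map m n i S) = (XBullet X).map m n i (F n S)) ∧
      (∀ n : ℕ, Function.Bijective (F n)) :=
  ⟨fun _ => X.pushforward, fun _ _ _ _ => rfl, fun _ _ i S => X.pushforward_map i S,
    X.bijective_pushforward⟩

end
end

section
/- Stokes' theorem for the standard simplex: let ω be a differential k-form of class C^∞ defined on an open neighborhood of Δ^{k+1} in ℝ^{k+1} (i.e., a C^∞ map from that neighborhood to the space of alternating k-linear maps (ℝ^{k+1})^k → ℝ). Then ∫_{Δ^{k+1}} dω = Σ_{i=0}^{k+1} (-1)^i ∫_{Δ^k} δ_i^* ω, where dω is the exterior derivative, defined by dω_x(v_0, …, v_k) = Σ_{i=0}^{k} (-1)^i (D ω_x (v_i))(v_0, …, v̂_i, …, v_k) with Dω the Fréchet derivative of ω, δ_i : Δ^k → Δ^{k+1} are the affine face inclusions, δ_i^* ω is the pullback (δ_i^*ω)_x(v_1,…,v_k)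 = ω_{δ_i(x)}(Dδ_i v_1, …, Dδ_i v_k), and for a top-degree m-form η on (a neighborhood of) Δ^m the integral is ∫_{Δ^m} η = ∫_{Δ^m} η_x(e_1, …, e_m) dλ(x) with e_1, …, e_m the standard basis of ℝ^m and λ the Lebesgue measure. -/
noncomputable section

open scoped BigOperators
open MeasureTheory

/-- The `i`-th affine face inclusion `δ_i : Δ^m → Δ^{m+1}` as a morphism of the simplex
category: the order embedding `Fin.succAbove i` skipping the `i`-th vertex. -/
def faceHom {m : ℕ} (i : Fin (m + 2)) : Fin (m + 1) →o Fin (m + 2) :=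
  (Fin.succAboveOrderEmb i).toOrderHom

/-- The value of the exterior derivative `dω` of a `k`-form `ω` on `ℝ^d` at the point `x`
on the vectors `v_0, …, v_k`:
`dω_x(v_0, …, v_k) = ∑ i, (-1)^i (Dω_x(v_i))(v_0, …, v̂_i, …, v_k)`,
`Dω` being the Fréchet derivative of `ω`. -/
def extDerEval {d k : ℕ} (ω : (Fin d → ℝ) → ((Fin d → ℝ) [×k]→L[ℝ] ℝ))
    (x : Fin d → ℝ) (v : Fin (k + 1) → (Fin d → ℝ)) : ℝ :=
  ∑ i : Fin (k + 1), (-1 : ℝ) ^ (i : ℕ) *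
    (fderiv ℝ ω x (v i)) (fun l : Fin k => v (i.succAbove l))


lemma tsimplex_isClosed (d : ℕ) : IsClosed (TSimplex d) := by
  have : TSimplex d = (⋂ i, {x : Fin d → ℝ | 0 ≤ x i}) ∩ {x | ∑ i, x i ≤ 1} := by
    ext x; simp [TSimplex, Set.mem_iInter]
  rw [this]
  exact (isClosed_iInter fun i => isClosed_le continuous_const (continuous_apply i)).inter
    (isClosed_le (by fun_prop) continuous_const)

lemma tsimplex_isCompact (d : ℕ) : IsCompact (TSimplex d) := by
  refine (isCompact_Icc (a := (0 : Fin d → ℝ)) (b := 1)).of_isClosed_subset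
    (tsimplex_isClosed d) ?_
  rintro x ⟨hx0, hx1⟩
  refine ⟨fun i => hx0 i, fun i => ?_⟩
  calc x i ≤ ∑ j, x j := Finset.single_le_sum (fun j _ => hx0 j) (Finset.mem_univ i)
  _ ≤ 1 := hx1

lemma tsimplex_measurableSet (d : ℕ) : MeasurableSet (TSimplex d) :=
  (tsimplex_isClosed d).measurableSet

lemma sum_bary_s9 {k : ℕ} (u : Fin k → ℝ) : ∑ j, bary u j = 1 := by
  rw [Fin.sum_univ_succ]
  simp [bary]

lemma mem_tsimplex_iff_bary {k : ℕ} {u : Fin k → ℝ} :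
    u ∈ TSimplex k ↔ ∀ j, 0 ≤ bary u j := by
  constructor
  · rintro ⟨h0, h1⟩ j
    refine Fin.cases ?_ (fun l => ?_) j
    · simpa [bary] using h1
    · simpa [bary] using h0 l
  · intro h
    refine ⟨fun i => by simpa [bary] using h i.succ, ?_⟩
    have := h 0
    simp only [bary, Fin.cons_zero] at this
    linarith

lemma sum_insertNth {k : ℕ} (i : Fin (k + 1)) (t : ℝ) (x : Fin k → ℝ) :
    ∑ j, Fin.insertNth i t x j = t + ∑ j, x j := by
  rw [Fin.sum_univ_succAbove _ i]
  simp

lemma insertNth_mem_tsimplex_iff {k : ℕ} {i : Fin (k + 1)} {t : ℝ} {x : Fin k → ℝ} :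
    Fin.insertNth i t x ∈ TSimplex (k + 1) ↔
      x ∈ TSimplex k ∧ t ∈ Set.Icc 0 (1 - ∑ j, x j) := by
  constructor
  · rintro ⟨h0, h1⟩
    rw [sum_insertNth] at h1
    have hx0 : ∀ j, 0 ≤ x j := fun j => by simpa using h0 (i.succAbove j)
    have ht : 0 ≤ t := by simpa using h0 i
    exact ⟨⟨hx0, by linarith⟩, ht, by linarith⟩
  · rintro ⟨⟨hx0, _⟩, ht0, ht1⟩
    refine ⟨fun j => ?_, ?_⟩
    · rcases eq_or_ne j i with rfl | hne
      · simpa using ht0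
      · obtain ⟨l, rfl⟩ := Fin.exists_succAbove_eq hne
        simpa using hx0 l
    · rw [sum_insertNth]; linarith

lemma bary_mem_tsimplex {k : ℕ} {u : Fin k → ℝ} (hu : u ∈ TSimplex k) :
    bary u ∈ TSimplex (k + 1) := by
  refine ⟨mem_tsimplex_iff_bary.1 hu, ?_⟩
  rw [sum_bary_s9]

lemma faceHom_apply {m : ℕ} (i : Fin (m + 2)) (j : Fin (m + 1)) :
    faceHom i j = i.succAbove j := rfl

lemma face_zero {k : ℕ} : affineAux (faceHom (0 : Fin (k + 2))) = bary := by
  funext x j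
  have h : Finset.univ.filter (fun i : Fin (k + 1) => faceHom (0 : Fin (k+2)) i = j.succ)
      = {j} := by
    ext i
    simp [faceHom_apply, Fin.zero_succAbove, Fin.succ_inj, eq_comm]
  rw [affineAux, h, Finset.sum_singleton]

lemma face_succ {k : ℕ} (c : Fin (k + 1)) :
    affineAux (faceHom c.succ) = fun x => Fin.insertNth (α := fun _ => ℝ) c 0 x := by
  funext x j
  rcases eq_or_ne j c with rfl | hne
  · have h : Finset.univ.filter (fun i : Fin (k + 1) => faceHom j.succ i = j.succ) = ∅ := by
      ext i
      simp only [Finset.mem_filter, Finset.mem_univ, true_and, Finset.notMem_empty, iff_false]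
      exact Fin.succAbove_ne _ i
    rw [affineAux, h, Finset.sum_empty, Fin.insertNth_apply_same]
  · obtain ⟨l, rfl⟩ := Fin.exists_succAbove_eq hne
    have h : Finset.univ.filter
        (fun i : Fin (k + 1) => faceHom c.succ i = (c.succAbove l).succ) = {l.succ} := by
      ext i
      simp only [Finset.mem_filter, Finset.mem_univ, true_and, Finset.mem_singleton]
      rw [faceHom_apply]
      constructor
      · intro h
        refine Fin.cases ?_ (fun m hm => ?_) i h
        · intro h0
          rw [Fin.succ_succAbove_zero] at h0
          exact absurd h0.symm (Fin.succ_ne_zero _)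
        · rw [Fin.succ_succAbove_succ, Fin.succ_inj] at hm
          rw [Fin.succAbove_right_injective hm]
      · rintro rfl
        rw [Fin.succ_succAbove_succ]
    rw [affineAux, h, Finset.sum_singleton, Fin.insertNth_apply_succAbove]
    simp [bary]

/-- The linear part of `bary` as a continuous linear map. -/
def baryCLM (k : ℕ) : (Fin k → ℝ) →L[ℝ] (Fin (k + 1) → ℝ) :=
  LinearMap.toContinuousLinearMap
    { toFun := fun v => Fin.cons (-∑ i, v i) v
      map_add' := by
        intro x y
        funext j
        refine Fin.cases ?_ (fun l => ?_) j <;>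
          simp [Finset.sum_add_distrib]; ring
      map_smul' := by
        intro c x
        funext j
        refine Fin.cases ?_ (fun l => ?_) j <;>
          simp [Finset.mul_sum] }

lemma baryCLM_apply {k : ℕ} (v : Fin k → ℝ) :
    baryCLM k v = Fin.cons (-∑ i, v i) v := rfl

lemma hasFDerivAt_bary {k : ℕ} (x : Fin k → ℝ) :
    HasFDerivAt bary (baryCLM k) x := by
  have h : bary = fun x : Fin k → ℝ => Fin.cons (1 : ℝ) (0 : Fin k → ℝ) + baryCLM k x := by
    funext x j
    refine Fin.cases ?_ (fun l => ?_) j <;>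
      simp [bary, baryCLM_apply] <;> ring
  rw [h]
  exact (baryCLM k).hasFDerivAt.const_add _

lemma baryCLM_single {k : ℕ} (l : Fin k) :
    baryCLM k (Pi.single l 1) = Pi.single l.succ 1 - Pi.single (0 : Fin (k + 1)) 1 := by
  funext j
  refine Fin.cases ?_ (fun m => ?_) j
  · simp [baryCLM_apply, Pi.single_apply, (Fin.succ_ne_zero l)]
  · simp [baryCLM_apply, Pi.single_apply, Fin.succ_inj, (Fin.succ_ne_zero m).symm]

/-- Insertion of `0` at position `c` as a continuous linear map. -/
def insCLM {k : ℕ} (c : Fin (k + 1)) : (Fin k → ℝ) →L[ℝ] (Fin (k + 1) → ℝ) :=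
  LinearMap.toContinuousLinearMap
    { toFun := fun v => Fin.insertNth (α := fun _ => ℝ) c 0 v
      map_add' := by
        intro x y
        funext j
        rcases eq_or_ne j c with rfl | hne
        · simp
        · obtain ⟨l, rfl⟩ := Fin.exists_succAbove_eq hne
          simp
      map_smul' := by
        intro a x
        funext j
        rcases eq_or_ne j c with rfl | hne
        · simp
        · obtain ⟨l, rfl⟩ := Fin.exists_succAbove_eq hne
          simp }

lemma insCLM_apply {k : ℕ} (c : Fin (k + 1)) (v : Fin k → ℝ) :
    insCLM c v = Fin.insertNth (α := fun _ => ℝ) c 0 v := rfl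

lemma hasFDerivAt_ins {k : ℕ} (c : Fin (k + 1)) (x : Fin k → ℝ) :
    HasFDerivAt (fun x : Fin k → ℝ => Fin.insertNth (α := fun _ => ℝ) c 0 x) (insCLM c) x :=
  (insCLM c).hasFDerivAt

lemma insCLM_single {k : ℕ} (c : Fin (k + 1)) (l : Fin k) :
    insCLM c (Pi.single l 1) = Pi.single (c.succAbove l) 1 := by
  funext j
  rcases eq_or_ne j c with rfl | hne
  · simp [insCLM_apply, Pi.single_apply, (Fin.succAbove_ne j l).symm]
  · obtain ⟨m, rfl⟩ := Fin.exists_succAbove_eq hne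
    simp [insCLM_apply, Pi.single_apply, Fin.succAbove_right_injective.eq_iff]

lemma alt_expand {k : ℕ}
    (g : ContinuousMultilinearMap ℝ (fun _ : Fin k => (Fin (k + 1) → ℝ)) ℝ)
    (hg : ∀ (v : Fin k → (Fin (k + 1) → ℝ)) (i j : Fin k), i ≠ j → v i = v j → g v = 0) :
    g (fun l => Pi.single l.succ 1 - Pi.single (0 : Fin (k + 1)) 1) =
      ∑ i : Fin (k + 1), (-1 : ℝ) ^ (i : ℕ) *
        g (fun l => Pi.single (i.succAbove l) 1) := by
  classical
  set G : (Fin (k + 1) → ℝ) [⋀^Fin k]→ₗ[ℝ] ℝ :=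
    { g.toMultilinearMap with
      map_eq_zero_of_eq' := fun v i j hv hij => hg v i j hij hv } with hG
  have hGg : ∀ v, G v = g v := fun v => rfl
  set m : Fin k → (Fin (k + 1) → ℝ) := fun l => Pi.single l.succ 1 with hm
  set m' : Fin k → (Fin (k + 1) → ℝ) := fun _ => -Pi.single (0 : Fin (k + 1)) 1 with hm'
  have h1 : (fun l : Fin k => Pi.single l.succ 1 - Pi.single (0 : Fin (k + 1)) 1) = m + m' := by
    funext l
    simp [hm, hm', sub_eq_add_neg]
  rw [h1, ← hGg]
  have h2 : G (m + m') = ∑ s : Finset (Fin k), G (s.piecewise m m') :=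
    G.toMultilinearMap.map_add_univ m m'
  -- restrict to the subsets `univ` and `univ.erase l`
  set T : Finset (Finset (Fin k)) :=
    insert Finset.univ (Finset.univ.image fun l : Fin k => Finset.univ.erase l) with hT
  have h3 : ∑ s : Finset (Fin k), G (s.piecewise m m') = ∑ s ∈ T, G (s.piecewise m m') := by
    refine (Finset.sum_subset (Finset.subset_univ T) ?_).symm
    intro s _ hs
    simp only [hT, Finset.mem_insert, Finset.mem_image, Finset.mem_univ, true_and,
      not_or, not_exists] at hs
    obtain ⟨hs1, hs2⟩ := hs
    have hcard : 1 < sᶜ.card := by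
      rcases Nat.lt_or_ge 1 sᶜ.card with h | h
      · exact h
      · interval_cases h' : sᶜ.card
        · exfalso; apply hs1
          have := Finset.card_eq_zero.1 h'
          rwa [Finset.compl_eq_empty_iff] at this
        · exfalso
          obtain ⟨l, hl⟩ := Finset.card_eq_one.1 h'
          apply hs2 l
          have : s = sᶜᶜ := by simp
          rw [this, hl]
          simp [Finset.compl_eq_univ_sdiff, Finset.sdiff_singleton_eq_erase]
    obtain ⟨i, hi, j, hj, hij⟩ := Finset.one_lt_card.1 hcard
    rw [Finset.mem_compl] at hi hj
    refine G.map_eq_zero_of_eq _ ?_ hij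
    rw [Finset.piecewise_eq_of_notMem _ _ _ hi, Finset.piecewise_eq_of_notMem _ _ _ hj]
  have huniv_notmem : (Finset.univ : Finset (Fin k)) ∉
      Finset.univ.image fun l : Fin k => Finset.univ.erase l := by
    simp only [Finset.mem_image, Finset.mem_univ, true_and, not_exists]
    intro l h
    have : l ∈ Finset.univ.erase l := h.symm ▸ Finset.mem_univ l
    exact (Finset.notMem_erase l _) this
  have h4 : ∑ s ∈ T, G (s.piecewise m m') =
      G m + ∑ l : Fin k, G (Function.update m l (m' l)) := by
    rw [hT, Finset.sum_insert huniv_notmem, Finset.piecewise_univ]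
    congr 1
    rw [Finset.sum_image]
    · exact Finset.sum_congr rfl fun l _ => by rw [Finset.piecewise_erase_univ]
    · intro a _ b _ hab
      by_contra hne
      have : a ∈ Finset.univ.erase b := Finset.mem_erase.2 ⟨hne, Finset.mem_univ a⟩
      rw [← (id hab : Finset.univ.erase a = Finset.univ.erase b)] at this
      exact (Finset.notMem_erase a _) this
  have h5 : ∀ l : Fin k, G (Function.update m l (m' l)) =
      (-1 : ℝ) ^ ((l.succ : Fin (k + 1)) : ℕ) *
        G (fun l' => Pi.single ((l.succ : Fin (k + 1)).succAbove l') 1) := by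
    intro l
    have e1 : G (Function.update m l (m' l)) =
        -G (Function.update m l (Pi.single (0 : Fin (k + 1)) 1)) := by
      have := G.toMultilinearMap.map_update_neg m l (Pi.single (0 : Fin (k + 1)) 1)
      exact this
    have e2 : Function.update m l (Pi.single (0 : Fin (k + 1)) 1) =
        (fun l' => Pi.single ((l.succ : Fin (k + 1)).succAbove l') 1) ∘ (Fin.cycleRange l) := by
      funext j
      simp only [Function.comp_apply, Fin.succAbove_cycleRange]
      rcases eq_or_ne j l with rfl | hne
      · simp [Function.update_self]
      · rw [Function.update_of_ne hne]
        rw [Equiv.swap_apply_of_ne_of_ne (Fin.succ_ne_zero j) ?h2]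
        case h2 => exact fun h => hne (Fin.succ_injective _ h)
    have e3 : G ((fun l' => Pi.single ((l.succ : Fin (k + 1)).succAbove l') 1) ∘
        (Fin.cycleRange l)) = Equiv.Perm.sign (Fin.cycleRange l) •
          G (fun l' => Pi.single ((l.succ : Fin (k + 1)).succAbove l') 1) :=
      G.map_perm _ _
    rw [e1, e2, e3, Fin.sign_cycleRange]
    rw [Fin.val_succ]
    simp only [Units.smul_def, zsmul_eq_mul]
    push_cast
    ring
  rw [h2, h3, h4, Fin.sum_univ_succ]
  simp only [h5]
  have hm0 : m = fun l' => Pi.single ((0 : Fin (k + 1)).succAbove l') 1 := by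
    funext l'
    rw [Fin.zero_succAbove]
  rw [hm0]
  simp [hGg]

/-- The reparametrization of the simplex adapted to direction `i`. -/
def psi {k : ℕ} (i : Fin (k + 1)) (u : Fin k → ℝ) : Fin k → ℝ :=
  fun j => bary u (i.succAbove j)

lemma psi_zero {k : ℕ} : psi (0 : Fin (k + 1)) = id := by
  funext u j
  simp [psi, Fin.zero_succAbove, bary]

lemma sum_psi {k : ℕ} (i : Fin (k + 1)) (u : Fin k → ℝ) :
    ∑ j, psi i u j = 1 - bary u i := by
  have := Fin.sum_univ_succAbove (bary u) i
  rw [sum_bary_s9] at this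
  simp only [psi]
  linarith [this]

lemma insertNth_psi {k : ℕ} (i : Fin (k + 1)) (u : Fin k → ℝ) :
    Fin.insertNth i (1 - ∑ j, psi i u j) (psi i u) = bary u := by
  funext j'
  rcases eq_or_ne j' i with rfl | hne
  · rw [Fin.insertNth_apply_same, sum_psi]; ring
  · obtain ⟨l, rfl⟩ := Fin.exists_succAbove_eq hne
    rw [Fin.insertNth_apply_succAbove]
    rfl

lemma psi_mem_iff {k : ℕ} (i : Fin (k + 1)) (u : Fin k → ℝ) :
    psi i u ∈ TSimplex k ↔ u ∈ TSimplex k := by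
  rw [mem_tsimplex_iff_bary (u := u)]
  constructor
  · rintro ⟨h0, h1⟩ j
    rcases eq_or_ne j i with rfl | hne
    · rw [sum_psi] at h1; linarith
    · obtain ⟨l, rfl⟩ := Fin.exists_succAbove_eq hne
      exact h0 l
  · intro h
    refine ⟨fun j => h _, ?_⟩
    rw [sum_psi]
    have := h i
    linarith

lemma continuous_bary {k : ℕ} : Continuous (bary (m := k)) := by
  refine continuous_pi fun j => ?_
  refine Fin.cases ?_ (fun l => ?_) j
  · simp only [bary, Fin.cons_zero]; fun_prop
  · simp only [bary, Fin.cons_succ]; exact continuous_apply l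

lemma continuous_psi {k : ℕ} (i : Fin (k + 1)) : Continuous (psi i) :=
  continuous_pi fun j => (continuous_apply (i.succAbove j)).comp continuous_bary

/-- Inverse of `psi i`. -/
def chi {k : ℕ} (i : Fin (k + 1)) (x : Fin k → ℝ) : Fin k → ℝ :=
  fun j => Fin.insertNth (α := fun _ => ℝ) i (1 - ∑ l, x l) x j.succ

lemma continuous_chi {k : ℕ} (i : Fin (k + 1)) : Continuous (chi i) := by
  refine continuous_pi fun j => ?_
  rcases eq_or_ne (j.succ) i with h | hne
  · simp only [chi, h, Fin.insertNth_apply_same]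
    fun_prop
  · obtain ⟨l, hl⟩ := Fin.exists_succAbove_eq hne
    simp only [chi, ← hl, Fin.insertNth_apply_succAbove]
    exact continuous_apply l

lemma bary_chi {k : ℕ} (i : Fin (k + 1)) (x : Fin k → ℝ) :
    bary (chi i x) = Fin.insertNth (α := fun _ => ℝ) i (1 - ∑ l, x l) x := by
  set B := Fin.insertNth (α := fun _ => ℝ) i (1 - ∑ l, x l) x with hB
  have hsum : ∑ j', B j' = 1 := by
    rw [hB, Fin.sum_univ_succAbove _ i]
    simp
  have hsum' : ∑ j, chi i x j = 1 - B 0 := by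
    have h2 : ∑ j', B j' = B 0 + ∑ j : Fin k, B j.succ := Fin.sum_univ_succ B
    rw [hsum] at h2
    simp only [chi, ← hB]
    linarith
  funext j
  refine Fin.cases ?_ (fun l => ?_) j
  · rw [bary, Fin.cons_zero, hsum']; ring
  · rw [bary, Fin.cons_succ]; rfl

lemma psi_chi {k : ℕ} (i : Fin (k + 1)) (x : Fin k → ℝ) : psi i (chi i x) = x := by
  funext j
  rw [psi, bary_chi, Fin.insertNth_apply_succAbove]

lemma chi_psi {k : ℕ} (i : Fin (k + 1)) (u : Fin k → ℝ) : chi i (psi i u) = u := by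
  funext j
  rw [chi, insertNth_psi, bary, Fin.cons_succ]

/-- `psi i` as a homeomorphism. -/
def psiHomeo {k : ℕ} (i : Fin (k + 1)) : (Fin k → ℝ) ≃ₜ (Fin k → ℝ) where
  toFun := psi i
  invFun := chi i
  left_inv := chi_psi i
  right_inv := psi_chi i
  continuous_toFun := continuous_psi i
  continuous_invFun := continuous_chi i

/-- The "first coordinate reflection" map. -/
def rho {m : ℕ} (v : Fin (m + 1) → ℝ) : Fin (m + 1) → ℝ :=
  Function.update v 0 (1 - ∑ j, v j)

lemma measurePreserving_rho {m : ℕ} : MeasurePreserving (rho (m := m)) volume volume := by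
  set e := MeasurableEquiv.piFinSuccAbove (fun _ : Fin (m + 1) => ℝ) 0 with he_def
  have he : MeasurePreserving e volume volume :=
    volume_preserving_piFinSuccAbove (fun _ : Fin (m + 1) => ℝ) 0
  set S : ℝ × (Fin m → ℝ) → ℝ × (Fin m → ℝ) := fun p => ((1 - ∑ j, p.2 j) - p.1, p.2) with hS
  have hg : Measurable (Function.uncurry fun (v : Fin m → ℝ) (t : ℝ) => (1 - ∑ j, v j) - t) := by
    apply Measurable.sub
    · fun_prop
    · exact measurable_snd
  have hmap : ∀ᵐ (v : Fin m → ℝ) ∂(volume : Measure (Fin m → ℝ)),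
      Measure.map (fun t : ℝ => (1 - ∑ j, v j) - t) volume = volume := by
    filter_upwards with v
    exact (Measure.measurePreserving_sub_left volume _).map_eq
  have hS' : MeasurePreserving (fun p : (Fin m → ℝ) × ℝ => (p.1, (1 - ∑ j, p.1 j) - p.2))
      (volume.prod volume) (volume.prod volume) :=
    (MeasurePreserving.id (volume : Measure (Fin m → ℝ))).skew_product hg hmap
  have hSmp : MeasurePreserving S (volume.prod volume) (volume.prod volume) := by
    have h1 : S = Prod.swap ∘ (fun p : (Fin m → ℝ) × ℝ => (p.1, (1 - ∑ j, p.1 j) - p.2))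
        ∘ Prod.swap := by
      funext p; simp [hS, Prod.swap]
    rw [h1]
    exact Measure.measurePreserving_swap.comp (hS'.comp Measure.measurePreserving_swap)
  have hrho : rho (m := m) = e.symm ∘ S ∘ e := by
    funext x j
    have hex : e x = (x 0, fun j : Fin m => x ((0 : Fin (m+1)).succAbove j)) := rfl
    have hsum : ∑ j : Fin m, x ((0 : Fin (m+1)).succAbove j) = (∑ j, x j) - x 0 := by
      rw [Fin.sum_univ_succAbove x 0]; ring
    have hstep : (S ∘ e) x = (1 - ∑ j, x j, fun j : Fin m => x ((0 : Fin (m+1)).succAbove j)) := by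
      simp only [Function.comp_apply, hex, hS, hsum]
      rw [Prod.mk.injEq]
      exact ⟨by ring, rfl⟩
    have hesymm : ∀ (a : ℝ) (v : Fin m → ℝ), e.symm (a, v) =
        Fin.insertNth (α := fun _ => ℝ) 0 a v := fun a v => rfl
    simp only [Function.comp_apply] at hstep ⊢
    rw [hstep, hesymm]
    refine Fin.cases ?_ (fun l => ?_) j
    · rw [Fin.insertNth_apply_same, rho, Function.update_self]
    · rw [← Fin.zero_succAbove l, Fin.insertNth_apply_succAbove, Fin.zero_succAbove, rho,
        Function.update_of_ne (Fin.succ_ne_zero l)]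
  rw [hrho]
  have hvol : (volume : Measure (ℝ × (Fin m → ℝ))) = volume.prod volume :=
    Measure.volume_eq_prod ℝ _
  rw [← hvol] at hSmp
  exact (he.symm).comp (hSmp.comp he)

lemma measurePreserving_psi {k : ℕ} (i : Fin (k + 1)) :
    MeasurePreserving (psi i) volume volume := by
  cases k with
  | zero =>
    have : psi i = id := by
      funext u; funext j; exact j.elim0
    rw [this]; exact MeasurePreserving.id _
  | succ m =>
    refine Fin.cases ?_ (fun c => ?_) i
    · rw [psi_zero]; exact MeasurePreserving.id _
    · have hdec : psi c.succ =
          rho (m := m) ∘ (fun u : Fin (m + 1) → ℝ => u ∘ ⇑(Fin.cycleRange c).symm) := by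
        funext u j
        simp only [Function.comp_apply]
        refine Fin.cases ?_ (fun l => ?_) j
        · rw [psi, Fin.succ_succAbove_zero, rho, Function.update_self]
          have h2 : ∑ j, (u ∘ ⇑(Fin.cycleRange c).symm) j = ∑ j, u j :=
            Equiv.sum_comp (Fin.cycleRange c).symm u
          rw [h2]
          simp [bary]
        · rw [psi, Fin.succ_succAbove_succ, rho,
            Function.update_of_ne (Fin.succ_ne_zero l)]
          have harg : (Fin.cycleRange c).symm l.succ = c.succAbove l := by
            rw [← Fin.cycleRange_succAbove c l, Equiv.symm_apply_apply]
          show bary u (c.succAbove l).succ = u ((Fin.cycleRange c).symm l.succ)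
          rw [harg]
          simp [bary]
      rw [hdec]
      have hperm : MeasurePreserving
          (fun u : Fin (m + 1) → ℝ => u ∘ ⇑(Fin.cycleRange c).symm) volume volume := by
        have : (fun u : Fin (m + 1) → ℝ => u ∘ ⇑(Fin.cycleRange c).symm) =
            ⇑(MeasurableEquiv.piCongrLeft (fun _ : Fin (m + 1) => ℝ)
              ((Fin.cycleRange c).symm : Fin (m + 1) ≃ Fin (m + 1))).symm := by
          funext u; funext a
          rw [MeasurableEquiv.symm]
          rfl
        rw [this]
        exact (volume_measurePreserving_piCongrLeft (fun _ : Fin (m + 1) => ℝ) _).symm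
      exact measurePreserving_rho.comp hperm

lemma psi_preimage_tsimplex {k : ℕ} (i : Fin (k + 1)) :
    psi i ⁻¹' TSimplex k = TSimplex k := by
  ext u
  exact psi_mem_iff i u

lemma setIntegral_psi {k : ℕ} (i : Fin (k + 1)) (F : (Fin k → ℝ) → ℝ) :
    ∫ u in TSimplex k, F (psi i u) = ∫ x in TSimplex k, F x := by
  have h := (measurePreserving_psi i).setIntegral_preimage_emb
    ((psiHomeo i).measurableEmbedding) F (TSimplex k)
  rwa [psi_preimage_tsimplex] at h

lemma insertNth_eq_add_smul {k : ℕ} (i : Fin (k + 1)) (t : ℝ) (x : Fin k → ℝ) :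
    Fin.insertNth (α := fun _ => ℝ) i t x =
      Fin.insertNth (α := fun _ => ℝ) i 0 x + t • (Pi.single i 1 : Fin (k + 1) → ℝ) := by
  funext j
  rcases eq_or_ne j i with rfl | hne
  · simp
  · obtain ⟨l, rfl⟩ := Fin.exists_succAbove_eq hne
    have h0 : (Pi.single i 1 : Fin (k + 1) → ℝ) (i.succAbove l) = 0 :=
      Pi.single_eq_of_ne (Fin.succAbove_ne i l) 1
    simp [h0]

lemma continuous_insertNth' {k : ℕ} (i : Fin (k + 1)) :
    Continuous (fun p : ℝ × (Fin k → ℝ) => Fin.insertNth (α := fun _ => ℝ) i p.1 p.2) := by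
  refine continuous_pi fun j => ?_
  rcases eq_or_ne j i with rfl | hne
  · simpa only [Fin.insertNth_apply_same] using continuous_fst
  · obtain ⟨l, rfl⟩ := Fin.exists_succAbove_eq hne
    simp only [Fin.insertNth_apply_succAbove]
    exact (continuous_apply l).comp continuous_snd

lemma stokes_dir {k : ℕ} (i : Fin (k + 1)) {U : Set (Fin (k + 1) → ℝ)} (hUo : IsOpen U)
    (hUΔ : TSimplex (k + 1) ⊆ U) (g : (Fin (k + 1) → ℝ) → ℝ)
    (g' : (Fin (k + 1) → ℝ) → ((Fin (k + 1) → ℝ) →L[ℝ] ℝ))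
    (hg : ∀ y ∈ U, HasFDerivAt g (g' y) y) (hg' : ContinuousOn g' U) :
    ∫ y in TSimplex (k + 1), g' y (Pi.single i 1) =
      ∫ x in TSimplex k,
        (g (Fin.insertNth i (1 - ∑ j, x j) x) - g (Fin.insertNth i 0 x)) := by
  classical
  set e := MeasurableEquiv.piFinSuccAbove (fun _ : Fin (k + 1) => ℝ) i with he_def
  have he : MeasurePreserving e volume volume :=
    volume_preserving_piFinSuccAbove (fun _ : Fin (k + 1) => ℝ) i
  have hesymm : ∀ p : ℝ × (Fin k → ℝ),
      e.symm p = Fin.insertNth (α := fun _ => ℝ) i p.1 p.2 := fun p => rfl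
  set F : ℝ × (Fin k → ℝ) → ℝ :=
    fun p => g' (Fin.insertNth (α := fun _ => ℝ) i p.1 p.2) (Pi.single i 1) with hF
  set S' : Set (ℝ × (Fin k → ℝ)) := ⇑e.symm ⁻¹' (TSimplex (k + 1)) with hS'def
  have hS' : S' = {p : ℝ × (Fin k → ℝ) |
      p.2 ∈ TSimplex k ∧ p.1 ∈ Set.Icc 0 (1 - ∑ j, p.2 j)} := by
    ext p
    rw [hS'def, Set.mem_preimage, hesymm]
    exact insertNth_mem_tsimplex_iff
  -- step 1: transfer to the product space
  have step1 : ∫ y in TSimplex (k + 1), g' y (Pi.single i 1) = ∫ p in S', F p := by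
    rw [← (he.symm).setIntegral_preimage_emb (MeasurableEquiv.measurableEmbedding _)
      (fun y => g' y (Pi.single i 1)) (TSimplex (k + 1))]
    rfl
  -- compactness and integrability
  have hS'comp : IsCompact S' := by
    have himg : S' = ⇑e '' TSimplex (k + 1) := by
      ext p
      constructor
      · intro hp
        exact ⟨e.symm p, hp, e.apply_symm_apply p⟩
      · rintro ⟨y, hy, rfl⟩
        simpa [hS'def, Set.mem_preimage, e.symm_apply_apply] using hy
    rw [himg]
    have hecont : Continuous ⇑e := by
      have : ⇑e = fun y : Fin (k + 1) → ℝ => (y i, fun j => y (i.succAbove j)) := rfl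
      rw [this]
      exact (continuous_apply i).prodMk (continuous_pi fun j => continuous_apply _)
    exact ((tsimplex_isCompact (k + 1)).image hecont)
  have hS'meas : MeasurableSet S' := hS'comp.isClosed.measurableSet
  have hFcont : ContinuousOn F S' := by
    have h1 : ContinuousOn (fun p : ℝ × (Fin k → ℝ) =>
        g' (Fin.insertNth (α := fun _ => ℝ) i p.1 p.2)) S' := by
      refine hg'.comp (continuous_insertNth' i).continuousOn ?_
      intro p hp
      rw [hS'def, Set.mem_preimage, hesymm] at hp
      exact hUΔ hp
    exact h1.clm_apply continuousOn_const
  have hFint : IntegrableOn F S' (volume : Measure (ℝ × (Fin k → ℝ))) :=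
    hFcont.integrableOn_compact hS'comp
  have hFind : Integrable (S'.indicator F) (volume : Measure (ℝ × (Fin k → ℝ))) :=
    (integrable_indicator_iff hS'meas).2 hFint
  -- step 2 : Fubini
  have step2 : ∫ p in S', F p = ∫ x : Fin k → ℝ, ∫ t : ℝ, S'.indicator F (t, x) := by
    rw [← integral_indicator hS'meas]
    have hvol : (volume : Measure (ℝ × (Fin k → ℝ))) = volume.prod volume :=
      Measure.volume_eq_prod _ _
    rw [hvol] at hFind ⊢
    rw [integral_prod _ hFind]
    exact integral_integral_swap hFind
  -- step 3: the inner integral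
  have step3 : ∀ x : Fin k → ℝ, (∫ t : ℝ, S'.indicator F (t, x)) =
      (TSimplex k).indicator (fun x => g (Fin.insertNth i (1 - ∑ j, x j) x) -
        g (Fin.insertNth i 0 x)) x := by
    intro x
    by_cases hx : x ∈ TSimplex k
    · have h1 : (fun t : ℝ => S'.indicator F (t, x)) =
          (Set.Icc (0:ℝ) (1 - ∑ j, x j)).indicator
            (fun t => g' (Fin.insertNth (α := fun _ => ℝ) i t x) (Pi.single i 1)) := by
        funext t
        by_cases ht : t ∈ Set.Icc (0:ℝ) (1 - ∑ j, x j)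
        · rw [Set.indicator_of_mem ht, Set.indicator_of_mem (by rw [hS']; exact ⟨hx, ht⟩)]
        · rw [Set.indicator_of_notMem ht, Set.indicator_of_notMem
            (by rw [hS']; exact fun h => ht h.2)]
      have hT0 : (0:ℝ) ≤ 1 - ∑ j, x j := by
        have := hx.2; linarith
      have hder : ∀ t ∈ Set.uIcc (0:ℝ) (1 - ∑ j, x j),
          HasDerivAt (fun t => g (Fin.insertNth (α := fun _ => ℝ) i t x))
            (g' (Fin.insertNth (α := fun _ => ℝ) i t x) (Pi.single i 1)) t := by
        intro t ht
        rw [Set.uIcc_of_le hT0] at ht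
        have hmem : Fin.insertNth (α := fun _ => ℝ) i t x ∈ TSimplex (k + 1) :=
          insertNth_mem_tsimplex_iff.2 ⟨hx, ht⟩
        have hins : HasDerivAt (fun t : ℝ => Fin.insertNth (α := fun _ => ℝ) i t x)
            (Pi.single i 1) t := by
          have h2 : (fun t : ℝ => Fin.insertNth (α := fun _ => ℝ) i t x) =
              (fun t : ℝ => Fin.insertNth (α := fun _ => ℝ) i 0 x + t • (Pi.single i 1 : Fin (k + 1) → ℝ)) := by
            funext t; exact insertNth_eq_add_smul i t x
          rw [h2]
          simpa using ((hasDerivAt_id t).smul_const (Pi.single i (1:ℝ))).const_add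
            (Fin.insertNth (α := fun _ => ℝ) i 0 x)
        exact (hg _ (hUΔ hmem)).comp_hasDerivAt t hins
      have hcont : ContinuousOn
          (fun t => g' (Fin.insertNth (α := fun _ => ℝ) i t x) (Pi.single i 1))
          (Set.uIcc (0:ℝ) (1 - ∑ j, x j)) := by
        refine ContinuousOn.clm_apply ?_ continuousOn_const
        refine hg'.comp ((continuous_insertNth' i).comp
          (continuous_id.prodMk continuous_const)).continuousOn ?_
        intro t ht
        rw [Set.uIcc_of_le hT0] at ht
        exact hUΔ (insertNth_mem_tsimplex_iff.2 ⟨hx, ht⟩)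
      have hii : IntervalIntegrable
          (fun t => g' (Fin.insertNth (α := fun _ => ℝ) i t x) (Pi.single i 1))
          volume 0 (1 - ∑ j, x j) := hcont.intervalIntegrable
      have hftc := intervalIntegral.integral_eq_sub_of_hasDerivAt hder hii
      rw [h1, integral_indicator measurableSet_Icc, Set.indicator_of_mem hx,
        integral_Icc_eq_integral_Ioc, ← intervalIntegral.integral_of_le hT0, hftc]
    · have h1 : (fun t : ℝ => S'.indicator F (t, x)) = fun _ => 0 := by
        funext t
        refine Set.indicator_of_notMem ?_ F
        rw [hS']
        exact fun h => hx h.1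
      rw [h1, Set.indicator_of_notMem hx]
      simp
  -- put the pieces together
  rw [step1, step2]
  have step4 : (∫ x : Fin k → ℝ, ∫ t : ℝ, S'.indicator F (t, x)) =
      ∫ x : Fin k → ℝ, (TSimplex k).indicator
        (fun x => g (Fin.insertNth i (1 - ∑ j, x j) x) - g (Fin.insertNth i 0 x)) x := by
    congr 1
    funext x
    exact step3 x
  rw [step4, integral_indicator (tsimplex_measurableSet k)]

/-- Stokes' theorem for the standard simplex.  Let `ω` be a `C^∞`
differential `k`-form defined on an open neighborhood `U` of `Δ^{k+1}` in `ℝ^{k+1}`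
(i.e. a `C^∞` map from `U` into the space of alternating `k`-linear maps
`(ℝ^{k+1})^k → ℝ`, encoded as a continuous multilinear map together with the alternating
property `halt`).  Then `∫_{Δ^{k+1}} dω = ∑_{i=0}^{k+1} (-1)^i ∫_{Δ^k} δ_i^* ω`, where
`δ_i : Δ^k → Δ^{k+1}` are the affine face inclusions, `δ_i^* ω` is the pullback
`(δ_i^*ω)_x(v_1,…,v_k) = ω_{δ_i(x)}(Dδ_i v_1, …, Dδ_i v_k)`, and top-degree forms are
integrated over the simplex by evaluating on the standard basis `e_1, …, e_m` of `ℝ^m`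
against Lebesgue measure. -/
theorem stokes_simplex (k : ℕ) (U : Set (Fin (k + 1) → ℝ)) (hUo : IsOpen U)
    (hUΔ : TSimplex (k + 1) ⊆ U)
    (ω : (Fin (k + 1) → ℝ) → ((Fin (k + 1) → ℝ) [×k]→L[ℝ] ℝ))
    (hω : ContDiffOn ℝ (⊤ : ℕ∞) ω U)
    (halt : ∀ (x : Fin (k + 1) → ℝ) (v : Fin k → (Fin (k + 1) → ℝ)) (i j : Fin k),
        i ≠ j → v i = v j → ω x v = 0) :
    (∫ x in TSimplex (k + 1), extDerEval ω x (fun i => Pi.single i 1)) =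
      ∑ i : Fin (k + 2), (-1 : ℝ) ^ (i : ℕ) *
        ∫ x in TSimplex k, (ω (affineAux (faceHom i) x))
          (fun l : Fin k => fderiv ℝ (affineAux (faceHom i)) x (Pi.single l 1)) := by
  classical
  -- notation
  set v : Fin (k + 1) → Fin k → (Fin (k + 1) → ℝ) :=
    fun i l => Pi.single (i.succAbove l) 1 with hv
  set f : Fin (k + 1) → (Fin (k + 1) → ℝ) → ℝ := fun i y => ω y (v i) with hf
  set A : Fin (k + 1) →
      ((Fin (k + 1) → ℝ) [×k]→L[ℝ] ℝ) →L[ℝ] ℝ :=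
    fun i => ContinuousMultilinearMap.apply ℝ (fun _ : Fin k => (Fin (k + 1) → ℝ)) ℝ (v i)
    with hA
  set g' : Fin (k + 1) → (Fin (k + 1) → ℝ) → ((Fin (k + 1) → ℝ) →L[ℝ] ℝ) :=
    fun i y => (A i).comp (fderiv ℝ ω y) with hg'def
  have hωdiff : ∀ y ∈ U, HasFDerivAt ω (fderiv ℝ ω y) y := by
    intro y hy
    exact ((hω.contDiffAt (hUo.mem_nhds hy)).differentiableAt (by simp)).hasFDerivAt
  have hfderivcont : ContinuousOn (fderiv ℝ ω) U :=
    hω.continuousOn_fderiv_of_isOpen hUo (by exact_mod_cast (le_top : (1:ℕ∞) ≤ ⊤))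
  have hg : ∀ i, ∀ y ∈ U, HasFDerivAt (f i) (g' i y) y := by
    intro i y hy
    exact ((A i).hasFDerivAt).comp y (hωdiff y hy)
  have hg' : ∀ i, ContinuousOn (g' i) U := by
    intro i
    exact ((ContinuousLinearMap.compL ℝ (Fin (k + 1) → ℝ)
      ((Fin (k + 1) → ℝ) [×k]→L[ℝ] ℝ) ℝ (A i)).continuous).comp_continuousOn hfderivcont
  have hfcont : ∀ i, ContinuousOn (f i) U := fun i =>
    ((A i).continuous).comp_continuousOn (hω.continuousOn)
  -- continuity of the parametrizations
  have hbotcont : ∀ c : Fin (k + 1),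
      Continuous (fun x : Fin k → ℝ => Fin.insertNth (α := fun _ => ℝ) c 0 x) := by
    intro c
    exact (continuous_insertNth' c).comp (continuous_const.prodMk continuous_id)
  have htopcont : ∀ i : Fin (k + 1),
      Continuous (fun x : Fin k → ℝ =>
        Fin.insertNth (α := fun _ => ℝ) i (1 - ∑ j, x j) x) := by
    intro i
    exact (continuous_insertNth' i).comp ((by fun_prop : Continuous
      (fun x : Fin k → ℝ => 1 - ∑ j, x j)).prodMk continuous_id)
  have htopmem : ∀ i : Fin (k + 1), ∀ x ∈ TSimplex k,
      Fin.insertNth (α := fun _ => ℝ) i (1 - ∑ j, x j) x ∈ TSimplex (k + 1) := by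
    intro i x hx
    exact insertNth_mem_tsimplex_iff.2 ⟨hx, ⟨by linarith [hx.2], le_refl _⟩⟩
  have hbotmem : ∀ c : Fin (k + 1), ∀ x ∈ TSimplex k,
      Fin.insertNth (α := fun _ => ℝ) c 0 x ∈ TSimplex (k + 1) := by
    intro c x hx
    exact insertNth_mem_tsimplex_iff.2 ⟨hx, ⟨le_refl _, by linarith [hx.2]⟩⟩
  have Itop : ∀ i : Fin (k + 1), IntegrableOn
      (fun x => f i (Fin.insertNth (α := fun _ => ℝ) i (1 - ∑ j, x j) x))
      (TSimplex k) volume := by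
    intro i
    refine ContinuousOn.integrableOn_compact (tsimplex_isCompact k) ?_
    exact (hfcont i).comp (htopcont i).continuousOn (fun x hx => hUΔ (htopmem i x hx))
  have Ibot : ∀ c : Fin (k + 1), IntegrableOn
      (fun x => f c (Fin.insertNth (α := fun _ => ℝ) c 0 x)) (TSimplex k) volume := by
    intro c
    refine ContinuousOn.integrableOn_compact (tsimplex_isCompact k) ?_
    exact (hfcont c).comp (hbotcont c).continuousOn (fun x hx => hUΔ (hbotmem c x hx))
  have Ibary : ∀ i : Fin (k + 1),
      IntegrableOn (fun u => f i (bary u)) (TSimplex k) volume := by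
    intro i
    refine ContinuousOn.integrableOn_compact (tsimplex_isCompact k) ?_
    exact (hfcont i).comp continuous_bary.continuousOn
      (fun u hu => hUΔ (bary_mem_tsimplex hu))
  -- Step 1 : write the left side as a sum of directional integrals
  have hL1 : (∫ x in TSimplex (k + 1), extDerEval ω x (fun i => Pi.single i 1)) =
      ∑ i : Fin (k + 1), (-1 : ℝ) ^ (i : ℕ) *
        ∫ x in TSimplex (k + 1), g' i x (Pi.single i 1) := by
    have hsummand : ∀ x, extDerEval ω x (fun i => Pi.single i 1) =
        ∑ i : Fin (k + 1), (-1 : ℝ) ^ (i : ℕ) * g' i x (Pi.single i 1) := by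
      intro x
      rw [extDerEval]
      refine Finset.sum_congr rfl fun i _ => ?_
      rfl
    rw [show (fun x => extDerEval ω x (fun i => Pi.single i 1)) =
      (fun x => ∑ i : Fin (k + 1), (-1 : ℝ) ^ (i : ℕ) * g' i x (Pi.single i 1))
      from funext hsummand]
    rw [integral_finset_sum]
    · exact Finset.sum_congr rfl fun i _ => integral_const_mul _ _
    · intro i _
      refine Integrable.const_mul ?_ _
      refine ContinuousOn.integrableOn_compact (tsimplex_isCompact (k + 1)) ?_
      exact (((hg' i).mono hUΔ).clm_apply continuousOn_const)
  -- Step 2 : Fubini + FTC in each direction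
  have hL2 : ∀ i : Fin (k + 1),
      ∫ x in TSimplex (k + 1), g' i x (Pi.single i 1) =
        (∫ x in TSimplex k,
          f i (Fin.insertNth (α := fun _ => ℝ) i (1 - ∑ j, x j) x)) -
        ∫ x in TSimplex k, f i (Fin.insertNth (α := fun _ => ℝ) i 0 x) := by
    intro i
    rw [stokes_dir i hUo hUΔ (f i) (g' i) (hg i) (hg' i)]
    exact integral_sub (Itop i) (Ibot i)
  -- Step 3 : the top contributions assemble to the 0-th face
  have hL3 : ∀ i : Fin (k + 1),
      (∫ x in TSimplex k,
        f i (Fin.insertNth (α := fun _ => ℝ) i (1 - ∑ j, x j) x)) =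
      ∫ u in TSimplex k, f i (bary u) := by
    intro i
    rw [← setIntegral_psi i
      (fun x => f i (Fin.insertNth (α := fun _ => ℝ) i (1 - ∑ j, x j) x))]
    refine setIntegral_congr_fun (tsimplex_measurableSet k) (fun u _ => ?_)
    rw [insertNth_psi]
  have hL4 : ∑ i : Fin (k + 1), (-1 : ℝ) ^ (i : ℕ) *
      ∫ u in TSimplex k, f i (bary u) =
      ∫ u in TSimplex k, ω (bary u)
        (fun l => Pi.single l.succ 1 - Pi.single (0 : Fin (k + 1)) 1) := by
    have h1 : ∀ u, ω (bary u)
        (fun l => Pi.single l.succ 1 - Pi.single (0 : Fin (k + 1)) 1) =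
        ∑ i : Fin (k + 1), (-1 : ℝ) ^ (i : ℕ) * f i (bary u) :=
      fun u => alt_expand (ω (bary u)) (halt (bary u))
    rw [show (fun u => ω (bary u)
        (fun l => Pi.single l.succ 1 - Pi.single (0 : Fin (k + 1)) 1)) =
      (fun u => ∑ i : Fin (k + 1), (-1 : ℝ) ^ (i : ℕ) * f i (bary u))
      from funext h1]
    rw [integral_finset_sum]
    · exact Finset.sum_congr rfl fun i _ => (integral_const_mul _ _).symm
    · exact fun i _ => ((Ibary i).const_mul _)
  -- Step 4 : identify the faces on the right side
  have hface0 : (∫ x in TSimplex k, (ω (affineAux (faceHom (0 : Fin (k + 2))) x))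
      (fun l : Fin k => fderiv ℝ (affineAux (faceHom (0 : Fin (k + 2)))) x
        (Pi.single l 1))) =
      ∫ u in TSimplex k, ω (bary u)
        (fun l => Pi.single l.succ 1 - Pi.single (0 : Fin (k + 1)) 1) := by
    refine setIntegral_congr_fun (tsimplex_measurableSet k) (fun x _ => ?_)
    rw [face_zero]
    congr 1
    funext l
    rw [(hasFDerivAt_bary x).fderiv, baryCLM_single]
  have hfacesucc : ∀ c : Fin (k + 1),
      (∫ x in TSimplex k, (ω (affineAux (faceHom c.succ) x))
        (fun l : Fin k => fderiv ℝ (affineAux (faceHom c.succ)) x (Pi.single l 1))) =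
      ∫ x in TSimplex k, f c (Fin.insertNth (α := fun _ => ℝ) c 0 x) := by
    intro c
    refine setIntegral_congr_fun (tsimplex_measurableSet k) (fun x _ => ?_)
    rw [face_succ]
    have harg : (fun l : Fin k =>
        fderiv ℝ (fun x : Fin k → ℝ => Fin.insertNth (α := fun _ => ℝ) c 0 x) x
          (Pi.single l 1)) = v c := by
      funext l
      rw [(hasFDerivAt_ins c x).fderiv, insCLM_single]
    rw [harg]
  -- Put everything together
  rw [hL1]
  rw [Fin.sum_univ_succ (f := fun i : Fin (k + 2) => (-1 : ℝ) ^ (i : ℕ) *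
      ∫ x in TSimplex k, (ω (affineAux (faceHom i) x))
        (fun l : Fin k => fderiv ℝ (affineAux (faceHom i)) x (Pi.single l 1)))]
  rw [hface0]
  simp only [hL2]
  have hsplit : ∑ i : Fin (k + 1), (-1 : ℝ) ^ (i : ℕ) *
      ((∫ x in TSimplex k,
        f i (Fin.insertNth (α := fun _ => ℝ) i (1 - ∑ j, x j) x)) -
       ∫ x in TSimplex k, f i (Fin.insertNth (α := fun _ => ℝ) i 0 x)) =
      (∑ i : Fin (k + 1), (-1 : ℝ) ^ (i : ℕ) *
        ∫ u in TSimplex k, f i (bary u)) +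
      ∑ i : Fin (k + 1), ((-1 : ℝ) ^ ((i.succ : Fin (k + 2)) : ℕ) *
        ∫ x in TSimplex k, f i (Fin.insertNth (α := fun _ => ℝ) i 0 x)) := by
    rw [← Finset.sum_add_distrib]
    refine Finset.sum_congr rfl fun i _ => ?_
    rw [hL3 i, Fin.val_succ, pow_succ]
    ring
  rw [hsplit, hL4]
  congr 1
  · simp
  · refine Finset.sum_congr rfl fun c _ => ?_
    rw [hfacesucc c]

end
end

section
/- Every nonempty open convex subset W ⊆ ℝ^d admits an exhaustion by nested images of smoothly embedded d-simplices: there exists a sequence of maps σ_m : Δ^d → W (m ∈ ℕ), each extending to a C^∞ map from an open neighborhood of Δ^d in ℝ^d into ℝ^d that is injective on Δ^d and whose derivative is injective at every point of Δ^d, such that σ_m(Δ^d) ⊆ σ_{m+1}(Δ^d) for every m and ⋃_m σ_m(Δ^d) = W. -/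
noncomputable section

open scoped BigOperators

/-- A smoothly embedded `d`-simplex in `ℝ^d`: a map `σ : Δ^d → ℝ^d` extending to a `C^∞`
map `g` from an open neighborhood `U` of `Δ^d` in `ℝ^d` into `ℝ^d`, which is injective on
`Δ^d` and whose (Fréchet) derivative is injective at every point of `Δ^d`. -/
def IsSmoothEmbeddedSimplex {d : ℕ} (σ : TSimplex d → (Fin d → ℝ)) : Prop :=
  ∃ (U : Set (Fin d → ℝ)) (g : (Fin d → ℝ) → (Fin d → ℝ)),
    IsOpen U ∧ TSimplex d ⊆ U ∧ ContDiffOn ℝ (⊤ : ℕ∞) g U ∧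
    (∀ x : TSimplex d, g x.1 = σ x) ∧
    Function.Injective σ ∧
    ∀ x : TSimplex d, Function.Injective (fderiv ℝ g x.1)

open Metric MeasureTheory Set Function Filter
open scoped Convolution Topology NNReal

lemma convexOn_fderiv_apply_le {E : Type*} [NormedAddCommGroup E] [NormedSpace ℝ E]
    {h : E → ℝ} (hc : ConvexOn ℝ Set.univ h) (hdiff : Differentiable ℝ h) (x v : E) :
    fderiv ℝ h x v ≤ h (x + v) - h x := by
  have h1 : HasDerivAt (fun t : ℝ => x + t • v) v 0 := by
    simpa using ((hasDerivAt_id (0:ℝ)).smul_const v).const_add x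
  have hline : HasDerivAt (fun t : ℝ => h (x + t • v)) (fderiv ℝ h x v) 0 := by
    have := (hdiff (x + (0:ℝ) • v)).hasFDerivAt.comp_hasDerivAt 0 h1
    simp only [zero_smul, add_zero] at this
    exact this
  have key : ∀ t ∈ Set.Ioo (0:ℝ) 1,
      slope (fun t : ℝ => h (x + t • v)) 0 t ≤ h (x + v) - h x := by
    intro t ht
    have hcv := hc.2 (Set.mem_univ x) (Set.mem_univ (x + v))
      (show (0:ℝ) ≤ 1 - t by linarith [ht.2]) ht.1.le (by ring)
    have harg : (1 - t) • x + t • (x + v) = x + t • v := by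
      rw [sub_smul, one_smul, smul_add]; abel
    rw [harg] at hcv
    have : h (x + t • v) - h (x + (0:ℝ) • v) ≤ t * (h (x + v) - h x) := by
      simp only [zero_smul, add_zero]
      have : (1 - t) * h x + t * h (x + v) = h x + t * (h (x + v) - h x) := by ring
      simp only [smul_eq_mul] at hcv
      linarith
    rw [slope_def_field, sub_zero, div_le_iff₀ ht.1]
    simpa [mul_comm] using this
  have htend : Tendsto (slope (fun t : ℝ => h (x + t • v)) 0) (𝓝[>] (0:ℝ))
      (𝓝 (fderiv ℝ h x v)) := by
    have := hasDerivAt_iff_tendsto_slope.mp hline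
    exact this.mono_left (nhdsWithin_mono 0 (fun t ht => ne_of_gt ht))
  refine le_of_tendsto htend ?_
  filter_upwards [Ioo_mem_nhdsGT_of_mem (by norm_num : (0:ℝ) ∈ Set.Ico (0:ℝ) 1)] with t ht
  exact key t ht

lemma convexOn_bump_convolution {d : ℕ} (φ : ContDiffBump (0 : Fin d → ℝ))
    {g : (Fin d → ℝ) → ℝ} (hg : Continuous g) (hcvg : ConvexOn ℝ Set.univ g) :
    ConvexOn ℝ Set.univ
      (φ.normed volume ⋆[ContinuousLinearMap.lsmul ℝ ℝ, volume] g) := by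
  set ρ := φ.normed volume with hρ
  have hρc : Continuous ρ := φ.continuous_normed
  have hρ0 : ∀ t, 0 ≤ ρ t := φ.nonneg_normed
  have hint : ∀ x : Fin d → ℝ, Integrable (fun t => ρ t * g (x - t)) volume := by
    intro x
    apply Continuous.integrable_of_hasCompactSupport
    · exact hρc.mul (hg.comp (continuous_const.sub continuous_id))
    · exact φ.hasCompactSupport_normed.mul_right
  refine ⟨convex_univ, ?_⟩
  intro x _ y _ a b ha hb hab
  simp only [convolution_def, ContinuousLinearMap.lsmul_apply, smul_eq_mul]
  have pw : ∀ t, ρ t * g (a • x + b • y - t)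
      ≤ a * (ρ t * g (x - t)) + b * (ρ t * g (y - t)) := by
    intro t
    have harg : a • x + b • y - t = a • (x - t) + b • (y - t) := by
      rw [smul_sub, smul_sub, sub_add_sub_comm, ← add_smul, hab, one_smul]
    have h1 : g (a • (x - t) + b • (y - t)) ≤ a * g (x - t) + b * g (y - t) := by
      simpa [smul_eq_mul] using
        hcvg.2 (Set.mem_univ (x - t)) (Set.mem_univ (y - t)) ha hb hab
    calc ρ t * g (a • x + b • y - t) = ρ t * g (a • (x - t) + b • (y - t)) := by rw [harg]
      _ ≤ ρ t * (a * g (x - t) + b * g (y - t)) := mul_le_mul_of_nonneg_left h1 (hρ0 t)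
      _ = a * (ρ t * g (x - t)) + b * (ρ t * g (y - t)) := by ring
  calc (∫ t, ρ t * g (a • x + b • y - t))
      ≤ ∫ t, (a * (ρ t * g (x - t)) + b * (ρ t * g (y - t))) :=
        integral_mono (hint _) (((hint x).const_mul a).add ((hint y).const_mul b)) pw
    _ = a * (∫ t, ρ t * g (x - t)) + b * (∫ t, ρ t * g (y - t)) := by
        rw [integral_add ((hint x).const_mul a) ((hint y).const_mul b)]
        simp only [← smul_eq_mul, integral_smul]

lemma exists_squash (d : ℕ) (W : Set (Fin d → ℝ)) (hWo : IsOpen W) (hWc : Convex ℝ W)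
    (h0 : (0 : Fin d → ℝ) ∈ W) :
    ∃ (ψ : (Fin d → ℝ) → (Fin d → ℝ)) (D : (Fin d → ℝ) → (Fin d → ℝ) →L[ℝ] (Fin d → ℝ)),
      ContDiff ℝ (⊤ : ℕ∞) ψ ∧ Function.Injective ψ ∧
      (∀ x, HasFDerivAt ψ (D x) x) ∧ (∀ x, Function.Injective (D x)) ∧
      Set.range ψ = W := by
  classical
  -- Step 1: the gauge of `W` and its properties; afterwards we forget its definition.
  obtain ⟨g, hgc, hgnn, hgcvx, hgsmul, hgW, hK⟩ :
      ∃ g : (Fin d → ℝ) → ℝ, Continuous g ∧ (∀ x, 0 ≤ g x) ∧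
        ConvexOn ℝ Set.univ g ∧
        (∀ (a : ℝ), 0 ≤ a → ∀ x, g (a • x) = a * g x) ∧
        {x | g x < 1} = W ∧
        ∃ K : ℝ, 1 ≤ K ∧ ∀ x y, dist (g x) (g y) ≤ K * dist x y := by
    obtain ⟨r, hr, hrball⟩ := Metric.mem_nhds_iff.mp (hWo.mem_nhds h0)
    have habs : Absorbent ℝ W := absorbent_nhds_zero (hWo.mem_nhds h0)
    have hlip : LipschitzWith ⟨r, hr.le⟩⁻¹ (gauge W) :=
      hWc.lipschitzWith_gauge (by exact_mod_cast hr) hrball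
    have hsmul : ∀ (a : ℝ), 0 ≤ a → ∀ x, gauge W (a • x) = a * gauge W x := by
      intro a ha x
      rw [gauge_smul_of_nonneg ha, smul_eq_mul]
    refine ⟨gauge W, hlip.continuous, fun x => gauge_nonneg x, ?_, hsmul,
      gauge_lt_one_eq_self_of_isOpen hWc h0 hWo,
      max 1 ((⟨r, hr.le⟩⁻¹ : ℝ≥0) : ℝ), le_max_left _ _, fun x y =>
        le_trans (hlip.dist_le_mul x y)
          (mul_le_mul_of_nonneg_right (le_max_right _ _) dist_nonneg)⟩
    refine ⟨convex_univ, fun x _ y _ a b ha hb hab => ?_⟩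
    calc gauge W (a • x + b • y) ≤ gauge W (a • x) + gauge W (b • y) :=
          gauge_add_le hWc habs _ _
      _ = a • gauge W x + b • gauge W y := by
          rw [hsmul a ha x, hsmul b hb y, smul_eq_mul, smul_eq_mul]
  obtain ⟨K, hK1, hgK⟩ := hK
  have hKpos : (0:ℝ) < K := lt_of_lt_of_le one_pos hK1
  -- Step 2: a smooth convex function trapped between `g` and `g + 1/4`.
  obtain ⟨h, hsm, hcvh, hgle, hhle⟩ :
      ∃ h : (Fin d → ℝ) → ℝ, ContDiff ℝ (⊤ : ℕ∞) h ∧ ConvexOn ℝ Set.univ h ∧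
        (∀ x, g x ≤ h x) ∧ (∀ x, h x ≤ g x + 1/4) := by
    have hδpos : (0:ℝ) < 1/(8*K) := by positivity
    set φ : ContDiffBump (0 : Fin d → ℝ) := ⟨1/(8*K)/2, 1/(8*K), by positivity, by linarith⟩
      with hφdef
    set h₀ : (Fin d → ℝ) → ℝ := φ.normed volume ⋆[ContinuousLinearMap.lsmul ℝ ℝ, volume] g
      with hh₀def
    have hsm0 : ContDiff ℝ (⊤:ℕ∞) h₀ :=
      φ.hasCompactSupport_normed.contDiff_convolution_left _ φ.contDiff_normed
        hgc.locallyIntegrable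
    have happ : ∀ x, |h₀ x - g x| ≤ 1/8 := by
      intro x
      have hb : ∀ y ∈ ball x φ.rOut, dist (g y) (g x) ≤ 1/8 := by
        intro y hy
        have h1 : dist y x ≤ 1/(8*K) := by
          have := mem_ball.mp hy
          simp only [hφdef] at this
          linarith
        calc dist (g y) (g x) ≤ K * dist y x := hgK y x
          _ ≤ K * (1/(8*K)) := by nlinarith [dist_nonneg (x := y) (y := x)]
          _ = 1/8 := by field_simp
      have := φ.dist_normed_convolution_le (μ := volume) hgc.aestronglyMeasurable hb
      simpa [Real.dist_eq] using this
    refine ⟨fun y => h₀ y + 1/8, hsm0.add contDiff_const,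
      (convexOn_bump_convolution φ hgc hgcvx).add (convexOn_const _ convex_univ), ?_, ?_⟩
    · intro x; have := abs_le.mp (happ x); linarith [this.2]
    · intro x; have := abs_le.mp (happ x); linarith [this.1]
  have hpos : ∀ x, 0 < 1 + h x := fun x => by linarith [hgle x, hgnn x]
  have hdiff : Differentiable ℝ h := hsm.differentiable (by simp)
  have hkey : ∀ x, fderiv ℝ h x x ≤ h x + 1/4 := by
    intro x
    have h1 := convexOn_fderiv_apply_le hcvh hdiff x x
    have h2 : g (x + x) = 2 * g x := by
      rw [← two_smul ℝ x, hgsmul 2 (by norm_num) x]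
    have h3 : h (x + x) ≤ 2 * g x + 1/4 := by rw [← h2]; exact hhle _
    linarith [hgle x]
  -- Step 3: the squash map and its derivative.
  refine ⟨fun x => (1 + h x)⁻¹ • x,
    fun x => (1 + h x)⁻¹ • ContinuousLinearMap.id ℝ (Fin d → ℝ) +
      ((-((1 + h x) ^ 2)⁻¹) • fderiv ℝ h x).smulRight x, ?_, ?_, ?_, ?_, ?_⟩
  -- shared facts
  case _ => -- smoothness
    exact ((contDiff_const.add hsm).inv (fun x => (hpos x).ne')).smul contDiff_id
  case _ => -- injectivity of ψ
    have hdh : ∀ x : Fin d → ℝ, HasFDerivAt h (fderiv ℝ h x) x :=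
      fun x => (hdiff x).hasFDerivAt
    have hray : ∀ u : Fin d → ℝ, StrictMono (fun t : ℝ => t * (1 + h (t • u))⁻¹) := by
      intro u
      have hdF : ∀ t : ℝ, HasDerivAt (fun t : ℝ => t * (1 + h (t • u))⁻¹)
          (1 * (1 + h (t • u))⁻¹ +
            t * (-(fderiv ℝ h (t • u) u) / (1 + h (t • u)) ^ 2)) t := by
        intro t
        have h1 : HasDerivAt (fun t : ℝ => t • u) u t := by
          simpa using (hasDerivAt_id t).smul_const u
        have h2 : HasDerivAt (fun t : ℝ => h (t • u)) (fderiv ℝ h (t • u) u) t :=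
          (hdh (t • u)).comp_hasDerivAt t h1
        have h3 : HasDerivAt (fun t : ℝ => (1 + h (t • u))⁻¹)
            (-(fderiv ℝ h (t • u) u) / (1 + h (t • u)) ^ 2) t :=
          (h2.const_add 1).inv (hpos _).ne'
        exact (hasDerivAt_id t).mul h3
      apply strictMono_of_deriv_pos
      intro t
      rw [(hdF t).deriv]
      have hts : t * fderiv ℝ h (t • u) u = fderiv ℝ h (t • u) (t • u) := by
        rw [ContinuousLinearMap.map_smul, smul_eq_mul]
      have hk := hkey (t • u)
      have hcpos := hpos (t • u)
      have heq : 1 * (1 + h (t • u))⁻¹ +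
          t * (-(fderiv ℝ h (t • u) u) / (1 + h (t • u)) ^ 2)
          = ((1 + h (t • u)) - t * fderiv ℝ h (t • u) u) / (1 + h (t • u)) ^ 2 := by
        field_simp
        ring
      rw [heq, hts]
      apply div_pos
      · linarith
      · positivity
    intro a b hab
    simp only at hab
    have hrec : ∀ y : Fin d → ℝ, y = (1 + h y) • ((1 + h y)⁻¹ • y) := by
      intro y; rw [smul_smul, mul_inv_cancel₀ (hpos y).ne', one_smul]
    by_cases hu0 : (1 + h a)⁻¹ • a = 0
    · have ha' : a = 0 := by rw [hrec a, hu0, smul_zero]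
      have hb' : b = 0 := by rw [hrec b, ← hab, hu0, smul_zero]
      rw [ha', hb']
    · set u := (1 + h a)⁻¹ • a with hu
      have ha' : a = (1 + h a) • u := hrec a
      have hb' : b = (1 + h b) • u := by rw [hab]; exact hrec b
      have hFa : (1 + h a) * (1 + h ((1 + h a) • u))⁻¹ = 1 := by
        rw [← ha']
        exact mul_inv_cancel₀ (hpos a).ne'
      have hFb : (1 + h b) * (1 + h ((1 + h b) • u))⁻¹ = 1 := by
        rw [← hb']
        exact mul_inv_cancel₀ (hpos b).ne'
      have heq : (1 + h a) = (1 + h b) :=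
        (hray u).injective (hFa.trans hFb.symm)
      rw [ha', hb', heq]
  case _ => -- derivative formula
    intro x
    have h1 : HasFDerivAt (fun y => 1 + h y) (fderiv ℝ h x) x :=
      ((hdiff x).hasFDerivAt).const_add 1
    have hinvd : HasFDerivAt (fun y : Fin d → ℝ => (1 + h y)⁻¹)
        ((-((1 + h x) ^ 2)⁻¹) • fderiv ℝ h x) x :=
      (hasDerivAt_inv (hpos x).ne').comp_hasFDerivAt x h1
    exact hinvd.smul (hasFDerivAt_id x)
  case _ => -- injectivity of the derivative
    intro x u w huw
    have hcpos := hpos x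
    have hDapp : ∀ v : Fin d → ℝ,
        ((1 + h x)⁻¹ • ContinuousLinearMap.id ℝ (Fin d → ℝ) +
          ((-((1 + h x) ^ 2)⁻¹) • fderiv ℝ h x).smulRight x) v
        = (1 + h x)⁻¹ • v + (-((1 + h x) ^ 2)⁻¹ * fderiv ℝ h x v) • x := by
      intro v
      simp [ContinuousLinearMap.add_apply, ContinuousLinearMap.smul_apply,
        ContinuousLinearMap.smulRight_apply, ContinuousLinearMap.id_apply]
    have hsub : ((1 + h x)⁻¹ • ContinuousLinearMap.id ℝ (Fin d → ℝ) +
        ((-((1 + h x) ^ 2)⁻¹) • fderiv ℝ h x).smulRight x) (u - w) = 0 := by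
      rw [map_sub, huw, sub_self]
    rw [hDapp] at hsub
    set s := fderiv ℝ h x (u - w) with hs
    have h3 : (1 + h x)⁻¹ • (u - w) = (((1 + h x)^2)⁻¹ * s) • x := by
      have h3' := eq_neg_of_add_eq_zero_left hsub
      rw [h3', neg_mul, neg_smul, neg_neg]
    have hu : u - w = ((1 + h x)⁻¹ * s) • x := by
      calc u - w = (1 + h x) • ((1 + h x)⁻¹ • (u - w)) := by
            rw [smul_smul, mul_inv_cancel₀ hcpos.ne', one_smul]
        _ = (1 + h x) • ((((1 + h x)^2)⁻¹ * s) • x) := by rw [h3]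
        _ = ((1 + h x)⁻¹ * s) • x := by
            rw [smul_smul]; congr 1; field_simp
    by_cases hs0 : s = 0
    · have : u - w = 0 := by rw [hu, hs0, mul_zero, zero_smul]
      exact sub_eq_zero.mp this
    · exfalso
      have h4 : s = ((1 + h x)⁻¹ * s) * fderiv ℝ h x x := by
        conv_lhs => rw [hs, hu]
        rw [ContinuousLinearMap.map_smul, smul_eq_mul]
      have h6 : (1 + h x) * s = s * fderiv ℝ h x x := by
        calc (1 + h x) * s = (1 + h x) * (((1 + h x)⁻¹ * s) * fderiv ℝ h x x) := by
              rw [← h4]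
          _ = ((1 + h x) * (1 + h x)⁻¹) * (s * fderiv ℝ h x x) := by ring
          _ = s * fderiv ℝ h x x := by rw [mul_inv_cancel₀ hcpos.ne', one_mul]
      rcases mul_eq_zero.mp
          (show ((1 + h x) - fderiv ℝ h x x) * s = 0 by linear_combination h6) with h8 | h8
      · have := hkey x
        linarith
      · exact hs0 h8
  case _ => -- range
    apply Set.Subset.antisymm
    · rintro _ ⟨x, rfl⟩
      simp only
      rw [← hgW, Set.mem_setOf_eq, hgsmul _ (inv_nonneg.mpr (hpos x).le) x]
      have h1 : g x < 1 + h x := by linarith [hgle x]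
      calc (1 + h x)⁻¹ * g x < (1 + h x)⁻¹ * (1 + h x) :=
            mul_lt_mul_of_pos_left h1 (inv_pos.mpr (hpos x))
        _ = 1 := inv_mul_cancel₀ (hpos x).ne'
    · intro w hw
      have hgw : g w < 1 := by rw [← hgW] at hw; exact hw
      have hGc : Continuous fun s : ℝ => s - h (s • w) - 1 := by
        have : Continuous fun s : ℝ => h (s • w) :=
          hsm.continuous.comp (continuous_id.smul continuous_const)
        exact (continuous_id.sub this).sub continuous_const
      have hden : 0 < 1 - g w := by linarith
      set s₁ : ℝ := (9/4) / (1 - g w) with hs₁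
      have hs₁pos : 0 < s₁ := by positivity
      have hG0 : (0:ℝ) - h ((0:ℝ) • w) - 1 < 0 := by
        have h1 : (0:ℝ) • w = 0 := zero_smul _ _
        rw [h1]
        have := hgle 0
        have := hgnn 0
        linarith
      have hGs₁ : 0 ≤ s₁ - h (s₁ • w) - 1 := by
        have h1 : h (s₁ • w) ≤ s₁ * g w + 1/4 := by
          have h2 := hhle (s₁ • w)
          rw [hgsmul s₁ hs₁pos.le w] at h2
          linarith
        have h2 : s₁ * (1 - g w) = 9/4 := by
          rw [hs₁]; field_simp
        nlinarith
      obtain ⟨s, hsmem, hGs⟩ := intermediate_value_Icc hs₁pos.le hGc.continuousOn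
        (show (0:ℝ) ∈ Set.Icc ((0:ℝ) - h ((0:ℝ) • w) - 1) (s₁ - h (s₁ • w) - 1) from
          ⟨hG0.le, hGs₁⟩)
      simp only at hGs
      have hseq : s = 1 + h (s • w) := by linarith
      have hspos : 0 < s := by rw [hseq]; exact hpos _
      refine ⟨s • w, ?_⟩
      simp only
      rw [← hseq, smul_smul, inv_mul_cancel₀ hspos.ne', one_smul]

lemma convex_TSimplex (d : ℕ) : Convex ℝ (TSimplex d) := by
  intro x hx y hy a b ha hb hab
  refine ⟨fun i => by
    have := hx.1 i; have := hy.1 i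
    simp only [Pi.add_apply, Pi.smul_apply, smul_eq_mul]
    positivity, ?_⟩
  simp only [Pi.add_apply, Pi.smul_apply, smul_eq_mul, Finset.sum_add_distrib,
    ← Finset.mul_sum]
  have h1 : (0:ℝ) ≤ ∑ i, x i := Finset.sum_nonneg (fun i _ => hx.1 i)
  have h2 : (0:ℝ) ≤ ∑ i, y i := Finset.sum_nonneg (fun i _ => hy.1 i)
  nlinarith [hx.2, hy.2]

lemma qmem_TSimplex (d : ℕ) :
    (fun _ : Fin d => 1/(2*((d:ℝ)+1))) ∈ TSimplex d := by
  have hd : (0:ℝ) < 2*((d:ℝ)+1) := by positivity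
  constructor
  · intro i; positivity
  · rw [Finset.sum_const, Finset.card_univ, Fintype.card_fin, nsmul_eq_mul]
    rw [mul_one_div, div_le_one hd]
    nlinarith [Nat.cast_nonneg (α := ℝ) d]

lemma ball_subset_TSimplex (d : ℕ) :
    Metric.ball (fun _ : Fin d => 1/(2*((d:ℝ)+1))) (1/(2*((d:ℝ)+1))) ⊆ TSimplex d := by
  intro x hx
  have hd : (0:ℝ) < 2*((d:ℝ)+1) := by positivity
  have hdist := Metric.mem_ball.mp hx
  have hcoord : ∀ i, |x i - 1/(2*((d:ℝ)+1))| < 1/(2*((d:ℝ)+1)) := by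
    intro i
    have h1 := dist_le_pi_dist x (fun _ : Fin d => 1/(2*((d:ℝ)+1))) i
    rw [Real.dist_eq] at h1
    exact lt_of_le_of_lt h1 hdist
  constructor
  · intro i
    have h2 := (abs_lt.mp (hcoord i)).1
    linarith
  · have hub : ∀ i, x i ≤ 1/((d:ℝ)+1) := by
      intro i
      have h1 := (abs_lt.mp (hcoord i)).2
      have hne : ((d:ℝ)+1) ≠ 0 := by positivity
      have h2 : 1/(2*((d:ℝ)+1)) + 1/(2*((d:ℝ)+1)) = 1/((d:ℝ)+1) := by
        field_simp
        norm_num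
      linarith
    calc ∑ i, x i ≤ ∑ _i : Fin d, 1/((d:ℝ)+1) := Finset.sum_le_sum (fun i _ => hub i)
      _ = d * (1/((d:ℝ)+1)) := by
          rw [Finset.sum_const, Finset.card_univ, Fintype.card_fin, nsmul_eq_mul]
      _ ≤ 1 := by
          rw [mul_one_div, div_le_one (by positivity)]
          linarith

/-- Every nonempty open convex subset `W ⊆ ℝ^d` admits an exhaustion by
nested images of smoothly embedded `d`-simplices: there is a sequence `σ_m : Δ^d → W` of
smoothly embedded `d`-simplices with `σ_m(Δ^d) ⊆ σ_{m+1}(Δ^d)` for every `m` and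
`⋃_m σ_m(Δ^d) = W`. -/
theorem convex_open_exhaustion_by_embedded_simplices (d : ℕ) (W : Set (Fin d → ℝ))
    (hWo : IsOpen W) (hWc : Convex ℝ W) (hWne : W.Nonempty) :
    ∃ σ : ℕ → TSimplex d → (Fin d → ℝ),
      (∀ m, IsSmoothEmbeddedSimplex (σ m)) ∧
      (∀ m, Set.range (σ m) ⊆ W) ∧
      (∀ m, Set.range (σ m) ⊆ Set.range (σ (m + 1))) ∧
      (⋃ m, Set.range (σ m)) = W := by
  classical
  obtain ⟨w₀, hw₀⟩ := hWne
  have hW'o : IsOpen ((fun x => x + w₀) ⁻¹' W) :=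
    hWo.preimage (continuous_id.add continuous_const)
  have hW'c : Convex ℝ ((fun x => x + w₀) ⁻¹' W) := by
    intro x hx y hy a b ha hb hab
    have h1 : a • w₀ + b • w₀ = w₀ := by rw [← add_smul, hab, one_smul]
    have heq : a • (x + w₀) + b • (y + w₀) = (a • x + b • y) + w₀ := by
      calc a • (x + w₀) + b • (y + w₀)
          = a • x + b • y + (a • w₀ + b • w₀) := by rw [smul_add, smul_add]; abel
        _ = (a • x + b • y) + w₀ := by rw [h1]
    show (a • x + b • y) + w₀ ∈ W
    rw [← heq]
    exact hWc hx hy ha hb hab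
  have h0' : (0 : Fin d → ℝ) ∈ (fun x => x + w₀) ⁻¹' W := by
    show (0 : Fin d → ℝ) + w₀ ∈ W; rw [zero_add]; exact hw₀
  obtain ⟨ψ, D, hψsm, hψinj, hψd, hDinj, hψrange⟩ :=
    exists_squash d _ hW'o hW'c h0'
  set q : Fin d → ℝ := fun _ => 1/(2*((d:ℝ)+1)) with hqdef
  set r : ℝ := 1/(2*((d:ℝ)+1)) with hrdef
  have hrpos : 0 < r := by rw [hrdef]; positivity
  have hq : q ∈ TSimplex d := qmem_TSimplex d
  have hm1pos : ∀ m : ℕ, (0:ℝ) < (m:ℝ)+1 := fun m => by positivity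
  set A : ℕ → (Fin d → ℝ) → (Fin d → ℝ) := fun m z => ((m:ℝ)+1) • (z - q) + q with hAdef
  set σ : ℕ → TSimplex d → (Fin d → ℝ) := fun m x => ψ (A m x.1) + w₀ with hσdef
  have hsubW : ∀ m, Set.range (σ m) ⊆ W := by
    intro m
    rintro _ ⟨x, rfl⟩
    have h1 : ψ (A m x.1) ∈ (fun x => x + w₀) ⁻¹' W := by
      rw [← hψrange]; exact ⟨_, rfl⟩
    exact h1
  have hnested : ∀ m, Set.range (σ m) ⊆ Set.range (σ (m + 1)) := by
    intro m
    rintro _ ⟨x, rfl⟩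
    have ht0 : (0:ℝ) ≤ ((m:ℝ)+1)/((m:ℝ)+2) := by positivity
    have ht1 : ((m:ℝ)+1)/((m:ℝ)+2) ≤ 1 := by
      rw [div_le_one (by positivity)]; linarith
    have hy : (((m:ℝ)+1)/((m:ℝ)+2)) • x.1 + (1-(((m:ℝ)+1)/((m:ℝ)+2))) • q
        ∈ TSimplex d :=
      convex_TSimplex d x.2 hq ht0 (by linarith) (by ring)
    refine ⟨⟨_, hy⟩, ?_⟩
    simp only [hσdef]
    congr 2
    simp only [hAdef]
    have h1 : (((m:ℝ)+1)/((m:ℝ)+2)) • x.1 + (1-(((m:ℝ)+1)/((m:ℝ)+2))) • q - q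
        = (((m:ℝ)+1)/((m:ℝ)+2)) • (x.1 - q) := by
      rw [sub_smul, one_smul, smul_sub]; abel
    have hkey : (↑(m+1):ℝ)+1 = (m:ℝ)+2 := by push_cast; ring
    rw [h1, hkey, smul_smul]
    have h2 : ((m:ℝ)+2) * (((m:ℝ)+1)/((m:ℝ)+2)) = (m:ℝ)+1 := by
      field_simp
    rw [h2]
  have hsmooth : ∀ m, IsSmoothEmbeddedSimplex (σ m) := by
    intro m
    have hAc : ContDiff ℝ (⊤:ℕ∞) (A m) := by
      simp only [hAdef]
      exact ((contDiff_const (c := ((m:ℝ)+1))).smul (contDiff_id.sub contDiff_const)).add contDiff_const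
    have hAd : ∀ z, HasFDerivAt (A m)
        (((m:ℝ)+1) • ContinuousLinearMap.id ℝ (Fin d → ℝ)) z := by
      intro z
      simp only [hAdef]
      exact (((hasFDerivAt_id z).sub_const q).const_smul ((m:ℝ)+1)).add_const q
    refine ⟨Set.univ, fun z => ψ (A m z) + w₀, isOpen_univ, Set.subset_univ _, ?_,
      fun x => rfl, ?_, ?_⟩
    · exact (((hψsm.comp hAc).add contDiff_const)).contDiffOn
    · intro x y hxy
      simp only [hσdef] at hxy
      have h1 : ψ (A m x.1) = ψ (A m y.1) := add_right_cancel hxy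
      have h2 := hψinj h1
      simp only [hAdef] at h2
      have h3 : x.1 - q = y.1 - q :=
        smul_right_injective _ (hm1pos m).ne' (add_right_cancel h2)
      exact Subtype.ext (sub_left_injective h3)
    · intro x
      have hcomp : HasFDerivAt (fun z => ψ (A m z) + w₀)
          ((D (A m x.1)).comp (((m:ℝ)+1) • ContinuousLinearMap.id ℝ (Fin d → ℝ))) x.1 := by
        exact ((hψd (A m x.1)).comp x.1 (hAd x.1)).add_const w₀
      rw [hcomp.fderiv]
      intro v w hvw
      simp only [ContinuousLinearMap.coe_comp', Function.comp_apply,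
        ContinuousLinearMap.smul_apply, ContinuousLinearMap.id_apply] at hvw
      exact smul_right_injective _ (hm1pos m).ne' (hDinj _ hvw)
  refine ⟨σ, hsmooth, hsubW, hnested, ?_⟩
  apply Set.Subset.antisymm
  · exact Set.iUnion_subset hsubW
  · intro w hw
    have h1 : w - w₀ ∈ (fun x => x + w₀) ⁻¹' W := by
      show (w - w₀) + w₀ ∈ W; rw [sub_add_cancel]; exact hw
    rw [← hψrange] at h1
    obtain ⟨z, hz⟩ := h1
    obtain ⟨n, hn⟩ := exists_nat_gt (dist z q / r)
    have hx : q + ((n:ℝ)+1)⁻¹ • (z - q) ∈ TSimplex d := by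
      apply ball_subset_TSimplex d
      rw [Metric.mem_ball, dist_eq_norm]
      have h2 : q + ((n:ℝ)+1)⁻¹ • (z - q) - q = ((n:ℝ)+1)⁻¹ • (z - q) :=
        add_sub_cancel_left q _
      rw [h2, norm_smul, Real.norm_eq_abs,
        abs_of_pos (inv_pos.mpr (hm1pos n)), ← dist_eq_norm]
      have h3 : dist z q < ((n:ℝ)) * r := (div_lt_iff₀ hrpos).mp hn
      have h4 : dist z q < ((n:ℝ)+1) * r := by nlinarith
      rw [inv_mul_lt_iff₀ (hm1pos n)]
      rw [hrdef] at h4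
      convert h4 using 2
    refine Set.mem_iUnion.mpr ⟨n, ⟨⟨_, hx⟩, ?_⟩⟩
    simp only [hσdef]
    have hAx : A n (q + ((n:ℝ)+1)⁻¹ • (z - q)) = z := by
      simp only [hAdef]
      rw [add_sub_cancel_left, smul_smul, mul_inv_cancel₀ (hm1pos n).ne', one_smul,
        sub_add_cancel]
    rw [hAx, hz, sub_add_cancel]
end
end
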